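/- arXiv:2211.07051 — 7 statements merged into one kernel-verified Lean document; each statement's English description precedes it below -/
import Mathlib

section
/- Let γ ∈ (-1/2, 1] and a_k = (1+k^2)^{-γ} for k ∈ ℤ. Then there exist positive constants depending only on γ such that for all η ∈ ℝ, ∑_{k ∈ ℤ} a_k / (1+(η-k)^2) is comparable to (1+η^2)^{-γ}. -/
open Real

private lemma aux_summable_nat {r : ℝ} (hr : 1/2 < r) :
    Summable fun n : ℕ => (1 + (n : ℝ) ^ 2) ^ (-r) := by
  have h0 : Summable fun n : ℕ => (n : ℝ) ^ (-(2*r)) :=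
    (Real.summable_nat_rpow (p := -(2*r))).mpr (by linarith)
  have h1 : Summable fun n : ℕ => ((n : ℝ) + 1) ^ (-(2*r)) := by
    have h2 := (summable_nat_add_iff (f := fun n : ℕ => (n : ℝ) ^ (-(2*r))) 1).mpr h0
    refine h2.congr fun n => ?_
    push_cast
    ring_nf
  refine (h1.mul_left ((2:ℝ) ^ r)).of_nonneg_of_le (fun n => by positivity) (fun n => ?_)
  have hb : ((n:ℝ)+1)^2 / 2 ≤ 1 + (n:ℝ)^2 := by nlinarith [sq_nonneg ((n:ℝ) - 1)]
  have hx : (0:ℝ) ≤ (n:ℝ) + 1 := by positivity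
  calc (1 + (n:ℝ)^2) ^ (-r) ≤ (((n:ℝ)+1)^2 / 2) ^ (-r) :=
        Real.rpow_le_rpow_of_nonpos (by positivity) hb (by linarith)
    _ = 2 ^ r * ((n:ℝ)+1) ^ (-(2*r)) := by
        rw [Real.div_rpow (by positivity) (by norm_num),
          ← Real.rpow_natCast ((n:ℝ)+1) 2, ← Real.rpow_mul hx,
          Real.rpow_neg (by norm_num : (0:ℝ) ≤ 2)]
        rw [div_eq_mul_inv, inv_inv, mul_comm]
        congr 1
        push_cast
        ring_nf

private lemma aux_summable {r : ℝ} (hr : 1/2 < r) :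
    Summable fun k : ℤ => (1 + (k : ℝ) ^ 2) ^ (-r) := by
  refine Summable.of_nat_of_neg ?_ ?_
  · refine (aux_summable_nat hr).congr fun n => ?_
    norm_num
  · refine (aux_summable_nat hr).congr fun n => ?_
    push_cast
    norm_num

private lemma aux_one_le_tsum {r : ℝ} (hr : 1/2 < r) :
    (1:ℝ) ≤ ∑' k : ℤ, (1 + (k : ℝ) ^ 2) ^ (-r) := by
  have h := Summable.le_tsum (aux_summable hr) 0 (fun j _ => by positivity)
  simpa using h

private lemma shift_term {r : ℝ} (hr : 0 ≤ r) (η : ℝ) (k : ℤ) :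
    (1 + (η - (k:ℝ)) ^ 2) ^ (-r) ≤ 4 ^ r * (1 + ((k - round η : ℤ) : ℝ) ^ 2) ^ (-r) := by
  have ht : |η - (round η : ℝ)| ≤ 1/2 := abs_sub_round η
  have ht2 : (η - (round η : ℝ))^2 ≤ 1/4 := by
    have h := abs_le.mp ht
    nlinarith [h.1, h.2]
  have key : (1 + ((k - round η : ℤ) : ℝ) ^ 2) / 4 ≤ 1 + (η - (k:ℝ))^2 := by
    push_cast
    nlinarith [sq_nonneg (4*(η - (round η : ℝ)) - ((k:ℝ) - (round η : ℝ))),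
      sq_nonneg ((k:ℝ) - (round η : ℝ)), ht2]
  calc (1 + (η - (k:ℝ)) ^ 2) ^ (-r)
      ≤ ((1 + ((k - round η : ℤ) : ℝ) ^ 2) / 4) ^ (-r) :=
        Real.rpow_le_rpow_of_nonpos (by positivity) key (by linarith)
    _ = 4 ^ r * (1 + ((k - round η : ℤ) : ℝ) ^ 2) ^ (-r) := by
        rw [Real.div_rpow (by positivity) (by norm_num),
          Real.rpow_neg (by norm_num : (0:ℝ) ≤ 4), div_eq_mul_inv, inv_inv, mul_comm]

private lemma shift_summable {r : ℝ} (hr : 1/2 < r) (η : ℝ) :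
    Summable fun k : ℤ => (1 + (η - (k:ℝ)) ^ 2) ^ (-r) := by
  have h1 : Summable fun k : ℤ => (1 + ((k - round η : ℤ) : ℝ) ^ 2) ^ (-r) :=
    ((aux_summable hr).comp_injective (Equiv.subRight (round η)).injective).congr (fun k => rfl)
  exact (h1.mul_left ((4:ℝ) ^ r)).of_nonneg_of_le (fun k => by positivity)
    (fun k => shift_term (by linarith) η k)

private lemma shift_tsum_le {r : ℝ} (hr : 1/2 < r) (η : ℝ) :
    ∑' k : ℤ, (1 + (η - (k:ℝ)) ^ 2) ^ (-r) ≤ 4 ^ r * ∑' k : ℤ, (1 + (k : ℝ) ^ 2) ^ (-r) := by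
  have h1 : Summable fun k : ℤ => (1 + ((k - round η : ℤ) : ℝ) ^ 2) ^ (-r) :=
    ((aux_summable hr).comp_injective (Equiv.subRight (round η)).injective).congr (fun k => rfl)
  have h2 := Summable.tsum_le_tsum (fun k => shift_term (by linarith : (0:ℝ) ≤ r) η k)
    (shift_summable hr η) (h1.mul_left ((4:ℝ) ^ r))
  rw [tsum_mul_left] at h2
  have h3 : ∑' k : ℤ, (1 + ((k - round η : ℤ) : ℝ) ^ 2) ^ (-r)
      = ∑' k : ℤ, (1 + (k : ℝ) ^ 2) ^ (-r) :=
    (Equiv.subRight (round η)).tsum_eq (fun m : ℤ => (1 + (m : ℝ) ^ 2) ^ (-r))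
  rw [h3] at h2
  exact h2

open Real

private lemma point_nonneg {γ : ℝ} (h0 : 0 ≤ γ) (h1 : γ ≤ 1) (η : ℝ) (k : ℤ) :
    (1 + (k:ℝ) ^ 2) ^ (-γ) / (1 + (η - (k:ℝ)) ^ 2) ≤
      4 * (1 + η ^ 2) ^ (-γ) *
        ((1 + (k:ℝ) ^ 2) ^ (-(1:ℝ)) + (1 + (η - (k:ℝ)) ^ 2) ^ (-(1:ℝ))) := by
  set A : ℝ := 1 + (k:ℝ) ^ 2 with hA
  set B : ℝ := 1 + (η - (k:ℝ)) ^ 2 with hB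
  set E : ℝ := 1 + η ^ 2 with hE
  have hA0 : (0:ℝ) < A := by positivity
  have hB0 : (0:ℝ) < B := by positivity
  have hE0 : (0:ℝ) < E := by positivity
  have h4 : ((4:ℝ)) ^ γ ≤ 4 := by
    calc (4:ℝ) ^ γ ≤ (4:ℝ) ^ (1:ℝ) := Real.rpow_le_rpow_of_exponent_le (by norm_num) h1
      _ = 4 := Real.rpow_one 4
  have hEneg : (0:ℝ) < E ^ (-γ) := Real.rpow_pos_of_pos hE0 _
  -- the key: if E/4 ≤ X then X^(-γ) ≤ 4^γ * E^(-γ) ≤ 4 * E^(-γ)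
  have key : ∀ X : ℝ, 0 < X → E / 4 ≤ X → X ^ (-γ) ≤ 4 * E ^ (-γ) := by
    intro X hX0 hX
    calc X ^ (-γ) ≤ (E / 4) ^ (-γ) :=
          Real.rpow_le_rpow_of_nonpos (by positivity) hX (by linarith)
      _ = 4 ^ γ * E ^ (-γ) := by
          rw [Real.div_rpow hE0.le (by norm_num), Real.rpow_neg (by norm_num : (0:ℝ) ≤ 4),
            div_eq_mul_inv, inv_inv, mul_comm]
      _ ≤ 4 * E ^ (-γ) := by
          have := hEneg.le
          nlinarith
  rcases le_or_gt (E / 4) A with hcase | hcase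
  · -- case A
    have hAle : A ^ (-γ) ≤ 4 * E ^ (-γ) := key A hA0 hcase
    calc A ^ (-γ) / B = A ^ (-γ) * B⁻¹ := by rw [div_eq_mul_inv]
      _ ≤ 4 * E ^ (-γ) * B⁻¹ := mul_le_mul_of_nonneg_right hAle (by positivity)
      _ ≤ 4 * E ^ (-γ) * (A ^ (-(1:ℝ)) + B ^ (-(1:ℝ))) := by
          apply mul_le_mul_of_nonneg_left ?_ (by positivity)
          rw [Real.rpow_neg_one, Real.rpow_neg_one]
          have : (0:ℝ) ≤ A⁻¹ := by positivity
          linarith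
  · -- case B : A < E/4 forces E/4 ≤ B
    have hBcase : E / 4 ≤ B := by
      rw [hA] at hcase
      rw [hB, hE]
      nlinarith [sq_nonneg (η - 2*(k:ℝ)), sq_nonneg (η + 2*(k:ℝ))]
    have hBle : B ^ (-γ) ≤ 4 * E ^ (-γ) := key B hB0 hBcase
    have e1 : A⁻¹ ^ γ = A ^ (-γ) := by
      rw [Real.inv_rpow hA0.le, ← Real.rpow_neg hA0.le]
    have e2 : B⁻¹ ^ (1 - γ) = B ^ (γ - 1) := by
      rw [Real.inv_rpow hB0.le, ← Real.rpow_neg hB0.le]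
      congr 1
      ring
    have e3 : B ^ (-γ) * B ^ (γ - 1) = B⁻¹ := by
      rw [← Real.rpow_add hB0, show -γ + (γ - 1) = (-1:ℝ) by ring, Real.rpow_neg_one]
    have hsplit : A ^ (-γ) / B = B ^ (-γ) * (A⁻¹ ^ γ * B⁻¹ ^ (1 - γ)) := by
      rw [e1, e2, div_eq_mul_inv, ← e3]
      ring
    have hyoung : A⁻¹ ^ γ * B⁻¹ ^ (1 - γ) ≤ A⁻¹ + B⁻¹ := by
      have h := Real.geom_mean_le_arith_mean2_weighted h0 (by linarith : (0:ℝ) ≤ 1 - γ)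
        (by positivity : (0:ℝ) ≤ A⁻¹) (by positivity : (0:ℝ) ≤ B⁻¹) (by ring)
      have hA' : (0:ℝ) ≤ A⁻¹ := by positivity
      have hB' : (0:ℝ) ≤ B⁻¹ := by positivity
      nlinarith
    calc A ^ (-γ) / B = B ^ (-γ) * (A⁻¹ ^ γ * B⁻¹ ^ (1 - γ)) := hsplit
      _ ≤ (4 * E ^ (-γ)) * (A⁻¹ + B⁻¹) := by
          apply mul_le_mul hBle hyoung (by positivity)
          positivity
      _ = 4 * E ^ (-γ) * (A ^ (-(1:ℝ)) + B ^ (-(1:ℝ))) := by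
          rw [Real.rpow_neg_one, Real.rpow_neg_one]

private lemma point_neg {γ : ℝ} (hγ : γ ≤ 0) (η : ℝ) (k : ℤ) :
    (1 + (k:ℝ) ^ 2) ^ (-γ) / (1 + (η - (k:ℝ)) ^ 2) ≤
      2 ^ (-γ) * (1 + η ^ 2) ^ (-γ) * (1 + (η - (k:ℝ)) ^ 2) ^ (-(1 + γ)) := by
  set A : ℝ := 1 + (k:ℝ) ^ 2 with hA
  set B : ℝ := 1 + (η - (k:ℝ)) ^ 2 with hB
  set E : ℝ := 1 + η ^ 2 with hE
  have hA0 : (0:ℝ) < A := by positivity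
  have hB0 : (0:ℝ) < B := by positivity
  have hE0 : (0:ℝ) < E := by positivity
  have hpeetre : A ≤ 2 * E * B := by
    rw [hA, hB, hE]
    nlinarith [sq_nonneg (η - (η - (k:ℝ))), sq_nonneg (η * (η - (k:ℝ))), sq_nonneg ((k:ℝ)),
      sq_nonneg (η + (η - (k:ℝ)))]
  have hstep : A ^ (-γ) ≤ (2 * E * B) ^ (-γ) :=
    Real.rpow_le_rpow hA0.le hpeetre (by linarith)
  have hmul : (2 * E * B) ^ (-γ) = 2 ^ (-γ) * E ^ (-γ) * B ^ (-γ) := by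
    rw [Real.mul_rpow (by positivity) hB0.le, Real.mul_rpow (by norm_num) hE0.le]
  have e3 : B ^ (-γ) * B⁻¹ = B ^ (-(1 + γ)) := by
    rw [← Real.rpow_neg_one B, ← Real.rpow_add hB0]
    congr 1
    ring
  calc A ^ (-γ) / B = A ^ (-γ) * B⁻¹ := by rw [div_eq_mul_inv]
    _ ≤ 2 ^ (-γ) * E ^ (-γ) * B ^ (-γ) * B⁻¹ := by
        rw [← hmul]
        exact mul_le_mul_of_nonneg_right hstep (by positivity)
    _ = 2 ^ (-γ) * E ^ (-γ) * (1 + (η - (k:ℝ)) ^ 2) ^ (-(1 + γ)) := by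
        rw [mul_assoc, e3]

open Real

private lemma main_low {γ : ℝ} (η : ℝ)
    (hT : Summable (fun k : ℤ => (1 + (k:ℝ) ^ 2) ^ (-γ) / (1 + (η - (k:ℝ)) ^ 2)))
    (c : ℝ) (hc : c * (1 + η ^ 2) ^ (-γ) ≤
      (1 + ((round η : ℤ):ℝ) ^ 2) ^ (-γ) / (1 + (η - ((round η : ℤ):ℝ)) ^ 2)) :
    c * (1 + η ^ 2) ^ (-γ) ≤ ∑' k : ℤ, (1 + (k:ℝ) ^ 2) ^ (-γ) / (1 + (η - (k:ℝ)) ^ 2) :=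
  le_trans hc (Summable.le_tsum hT (round η) (fun j _ => by positivity))

private lemma round_sq (η : ℝ) : (η - ((round η : ℤ):ℝ)) ^ 2 ≤ 1/4 := by
  have h := abs_le.mp (abs_sub_round η)
  nlinarith [h.1, h.2]

/-- For `γ ∈ (-1/2, 1]` and `a_k = (1+k²)^{-γ}`, there are constants
`c₁, c₂ > 0` depending only on `γ` such that for every `η ∈ ℝ`,
`c₁ (1+η²)^{-γ} ≤ ∑_{k ∈ ℤ} a_k/(1+(η-k)²) ≤ c₂ (1+η²)^{-γ}`. -/
theorem stmt_2 (γ : ℝ) (hγ : γ ∈ Set.Ioc (-(1/2) : ℝ) 1) :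
    ∃ c₁ c₂ : ℝ, 0 < c₁ ∧ 0 < c₂ ∧ ∀ η : ℝ,
      c₁ * (1 + η ^ 2) ^ (-γ) ≤
        (∑' k : ℤ, (1 + (k : ℝ) ^ 2) ^ (-γ) / (1 + (η - k) ^ 2)) ∧
      (∑' k : ℤ, (1 + (k : ℝ) ^ 2) ^ (-γ) / (1 + (η - k) ^ 2)) ≤
        c₂ * (1 + η ^ 2) ^ (-γ) := by
  obtain ⟨hγl, hγu⟩ := hγ
  rcases le_or_gt 0 γ with h0 | h0
  · -- case 0 ≤ γ ≤ 1
    set S : ℝ := ∑' k : ℤ, (1 + (k:ℝ) ^ 2) ^ (-(1:ℝ)) with hSdef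
    have hS1 : (1:ℝ) ≤ S := aux_one_le_tsum (by norm_num)
    refine ⟨2 ^ (-γ) / 2, 20 * S, by positivity, by linarith, fun η => ?_⟩
    set E : ℝ := 1 + η ^ 2 with hEdef
    have hE0 : (0:ℝ) < E := by positivity
    have hf : Summable (fun k : ℤ => (1 + (k:ℝ) ^ 2) ^ (-(1:ℝ))) := aux_summable (by norm_num)
    have hg : Summable (fun k : ℤ => (1 + (η - (k:ℝ)) ^ 2) ^ (-(1:ℝ))) :=
      shift_summable (by norm_num) η
    have hM : Summable (fun k : ℤ => 4 * E ^ (-γ) *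
        ((1 + (k:ℝ) ^ 2) ^ (-(1:ℝ)) + (1 + (η - (k:ℝ)) ^ 2) ^ (-(1:ℝ)))) :=
      (hf.add hg).mul_left _
    have hT : Summable (fun k : ℤ => (1 + (k:ℝ) ^ 2) ^ (-γ) / (1 + (η - (k:ℝ)) ^ 2)) :=
      hM.of_nonneg_of_le (fun k => by positivity) (fun k => point_nonneg h0 hγu η k)
    constructor
    · -- lower bound
      refine main_low η hT _ ?_
      set n : ℤ := round η with hn
      have ht2 : (η - (n:ℝ)) ^ 2 ≤ 1/4 := round_sq η
      have hden : 1 + (η - (n:ℝ)) ^ 2 ≤ 2 := by linarith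
      have hden0 : (0:ℝ) < 1 + (η - (n:ℝ)) ^ 2 := by positivity
      have h2E : 1 + (n:ℝ) ^ 2 ≤ 2 * E := by
        rw [hEdef]
        nlinarith [sq_nonneg (2*η - (n:ℝ))]
      have hnum : (2 * E) ^ (-γ) ≤ (1 + (n:ℝ) ^ 2) ^ (-γ) :=
        Real.rpow_le_rpow_of_nonpos (by positivity) h2E (by linarith)
      have h2E' : (2 * E) ^ (-γ) = 2 ^ (-γ) * E ^ (-γ) :=
        Real.mul_rpow (by norm_num) hE0.le
      rw [h2E'] at hnum
      have hnn : (0:ℝ) ≤ (1 + (n:ℝ) ^ 2) ^ (-γ) := by positivity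
      calc 2 ^ (-γ) / 2 * E ^ (-γ) = (2 ^ (-γ) * E ^ (-γ)) / 2 := by ring
        _ ≤ (1 + (n:ℝ) ^ 2) ^ (-γ) / 2 := by linarith
        _ ≤ (1 + (n:ℝ) ^ 2) ^ (-γ) / (1 + (η - (n:ℝ)) ^ 2) := by gcongr
    · -- upper bound
      have hup := Summable.tsum_le_tsum (fun k => point_nonneg h0 hγu η k) hT hM
      rw [tsum_mul_left, Summable.tsum_add hf hg] at hup
      have hshift : ∑' k : ℤ, (1 + (η - (k:ℝ)) ^ 2) ^ (-(1:ℝ)) ≤ 4 * S := by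
        have h := shift_tsum_le (by norm_num : (1:ℝ)/2 < 1) η
        rwa [Real.rpow_one] at h
      have hEg : (0:ℝ) < E ^ (-γ) := Real.rpow_pos_of_pos hE0 _
      have hSnn : (0:ℝ) ≤ ∑' k : ℤ, (1 + (η - (k:ℝ)) ^ 2) ^ (-(1:ℝ)) :=
        tsum_nonneg (fun k => by positivity)
      calc (∑' k : ℤ, (1 + (k:ℝ) ^ 2) ^ (-γ) / (1 + (η - (k:ℝ)) ^ 2))
          ≤ 4 * E ^ (-γ) * (S + ∑' k : ℤ, (1 + (η - (k:ℝ)) ^ 2) ^ (-(1:ℝ))) := hup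
        _ ≤ 4 * E ^ (-γ) * (S + 4 * S) := by
            have : (0:ℝ) ≤ 4 * E ^ (-γ) := by positivity
            nlinarith
        _ = 20 * S * E ^ (-γ) := by ring
  · -- case -1/2 < γ < 0
    have hr : (1:ℝ)/2 < 1 + γ := by linarith
    set S : ℝ := ∑' k : ℤ, (1 + (k:ℝ) ^ 2) ^ (-(1 + γ)) with hSdef
    have hS1 : (1:ℝ) ≤ S := aux_one_le_tsum hr
    have hc2 : (0:ℝ) < 2 ^ (-γ) * (4 ^ (1 + γ) * S) := by positivity
    refine ⟨2 ^ γ / 2, 2 ^ (-γ) * (4 ^ (1 + γ) * S), by positivity, hc2, fun η => ?_⟩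
    set E : ℝ := 1 + η ^ 2 with hEdef
    have hE0 : (0:ℝ) < E := by positivity
    have hg : Summable (fun k : ℤ => (1 + (η - (k:ℝ)) ^ 2) ^ (-(1 + γ))) :=
      shift_summable hr η
    have hM : Summable (fun k : ℤ => 2 ^ (-γ) * E ^ (-γ) *
        (1 + (η - (k:ℝ)) ^ 2) ^ (-(1 + γ))) := hg.mul_left _
    have hT : Summable (fun k : ℤ => (1 + (k:ℝ) ^ 2) ^ (-γ) / (1 + (η - (k:ℝ)) ^ 2)) :=
      hM.of_nonneg_of_le (fun k => by positivity) (fun k => point_neg h0.le η k)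
    constructor
    · -- lower bound
      refine main_low η hT _ ?_
      set n : ℤ := round η with hn
      have ht2 : (η - (n:ℝ)) ^ 2 ≤ 1/4 := round_sq η
      have hden : 1 + (η - (n:ℝ)) ^ 2 ≤ 2 := by linarith
      have h2E : E / 2 ≤ 1 + (n:ℝ) ^ 2 := by
        rw [hEdef]
        nlinarith [sq_nonneg (η - 2*(η - (n:ℝ)))]
      have hnum : (E / 2) ^ (-γ) ≤ (1 + (n:ℝ) ^ 2) ^ (-γ) :=
        Real.rpow_le_rpow (by positivity) h2E (by linarith)
      have h2E' : (E / 2) ^ (-γ) = 2 ^ γ * E ^ (-γ) := by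
        rw [Real.div_rpow hE0.le (by norm_num), Real.rpow_neg (by norm_num : (0:ℝ) ≤ 2),
          div_eq_mul_inv, inv_inv, mul_comm]
      rw [h2E'] at hnum
      have hnn : (0:ℝ) ≤ (1 + (n:ℝ) ^ 2) ^ (-γ) := by positivity
      calc 2 ^ γ / 2 * E ^ (-γ) = (2 ^ γ * E ^ (-γ)) / 2 := by ring
        _ ≤ (1 + (n:ℝ) ^ 2) ^ (-γ) / 2 := by linarith
        _ ≤ (1 + (n:ℝ) ^ 2) ^ (-γ) / (1 + (η - (n:ℝ)) ^ 2) := by gcongr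
    · -- upper bound
      have hup := Summable.tsum_le_tsum (fun k => point_neg h0.le η k) hT hM
      rw [tsum_mul_left] at hup
      have hshift : ∑' k : ℤ, (1 + (η - (k:ℝ)) ^ 2) ^ (-(1 + γ)) ≤ 4 ^ (1 + γ) * S :=
        shift_tsum_le hr η
      have hEg : (0:ℝ) < E ^ (-γ) := Real.rpow_pos_of_pos hE0 _
      have h2g : (0:ℝ) < (2:ℝ) ^ (-γ) := by positivity
      calc (∑' k : ℤ, (1 + (k:ℝ) ^ 2) ^ (-γ) / (1 + (η - (k:ℝ)) ^ 2))
          ≤ 2 ^ (-γ) * E ^ (-γ) * ∑' k : ℤ, (1 + (η - (k:ℝ)) ^ 2) ^ (-(1 + γ)) := hup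
        _ ≤ 2 ^ (-γ) * E ^ (-γ) * (4 ^ (1 + γ) * S) := by
            apply mul_le_mul_of_nonneg_left hshift (by positivity)
        _ = 2 ^ (-γ) * (4 ^ (1 + γ) * S) * E ^ (-γ) := by ring
end

section
/- For γ ∈ (-1/2, 1] there exist constants c₁(γ), c₂(γ) > 0 such that for all η ∈ ℝ, c₁(γ)(1+η^2)^{-γ} ≤ ∫_ℝ (1+u^2)^{-γ}(1+(η-u)^2)^{-1} du ≤ c₂(γ)(1+η^2)^{-γ}. -/
/-!
Write `⟨x⟩ = 1 + x²`. Peetre's inequality `⟨a⟩^s ≤ 2^|s| ⟨b⟩^s ⟨a - b⟩^|s|` bounds the integrand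
from below by a multiple of `⟨η⟩^(-γ) ⟨η - u⟩^(-|γ| - 1)`, which gives the lower bound for every
`γ`, and, for `γ ≤ 0`, from above by a multiple of `⟨η⟩^(-γ) ⟨η - u⟩^(-γ - 1)`, which is integrable
precisely because `γ > -1/2`. For `0 ≤ γ ≤ 1` either `|u| ≥ |η|/2`, so that
`⟨u⟩^(-γ) ≤ 4 ⟨η⟩^(-γ)`, or `|u| < |η|/2`, so that `⟨η - u⟩⁻¹ ≤ 4 ⟨η⟩⁻¹` and
`⟨u⟩^(1-γ) ≤ ⟨η⟩^(1-γ)`; in both cases the integrand is at most `4 ⟨η⟩^(-γ) (⟨u⟩⁻¹ + ⟨η - u⟩⁻¹)`.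
-/

open MeasureTheory Real Set

lemma one_add_sq_le_two_mul_one_add_sq (a b : ℝ) :
    1 + a ^ 2 ≤ 2 * (1 + b ^ 2) * (1 + (a - b) ^ 2) := by
  nlinarith [sq_nonneg (a - 2 * b), mul_nonneg (sq_nonneg b) (sq_nonneg (a - b))]

lemma one_add_sq_rpow_le_of_nonneg (a b : ℝ) {s : ℝ} (hs : 0 ≤ s) :
    (1 + a ^ 2) ^ s ≤ 2 ^ s * (1 + b ^ 2) ^ s * (1 + (a - b) ^ 2) ^ s := by
  rw [← mul_rpow (by positivity) (by positivity), ← mul_rpow (by positivity) (by positivity)]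
  exact rpow_le_rpow (by positivity) (one_add_sq_le_two_mul_one_add_sq a b) hs

/-- Peetre's inequality. -/
lemma one_add_sq_rpow_le (a b s : ℝ) :
    (1 + a ^ 2) ^ s ≤ 2 ^ |s| * (1 + b ^ 2) ^ s * (1 + (a - b) ^ 2) ^ |s| := by
  rcases le_or_gt 0 s with hs | hs
  · rw [abs_of_nonneg hs]
    exact one_add_sq_rpow_le_of_nonneg a b hs
  · obtain ⟨t, ht, rfl⟩ : ∃ t, 0 < t ∧ s = -t := ⟨-s, by linarith, by ring⟩
    have key := one_add_sq_rpow_le_of_nonneg b a ht.le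
    rw [sub_sq_comm] at key
    have ha : 0 < (1 + a ^ 2) ^ t := by positivity
    have hb : 0 < (1 + b ^ 2) ^ t := by positivity
    rw [abs_neg, abs_of_pos ht, rpow_neg (by positivity), rpow_neg (by positivity),
      mul_assoc, mul_comm _ (_ ^ t), ← mul_assoc, ← div_eq_mul_inv, le_div_iff₀ hb,
      inv_mul_le_iff₀ ha]
    linarith

lemma one_add_sq_rpow_neg_mul_inv_le {γ : ℝ} (hγ₀ : 0 ≤ γ) (hγ₁ : γ ≤ 1) (η u : ℝ) :
    (1 + u ^ 2) ^ (-γ) * (1 + (η - u) ^ 2)⁻¹ ≤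
      4 * (1 + η ^ 2) ^ (-γ) * ((1 + u ^ 2)⁻¹ + (1 + (η - u) ^ 2)⁻¹) := by
  have hx : 0 < 1 + u ^ 2 := by positivity
  have hy : 0 < 1 + (η - u) ^ 2 := by positivity
  have hz : 0 < 1 + η ^ 2 := by positivity
  rcases le_or_gt (η ^ 2) (4 * u ^ 2) with h | h
  · have hxz : (1 + u ^ 2) ^ (-γ) ≤ 4 * (1 + η ^ 2) ^ (-γ) :=
      calc (1 + u ^ 2) ^ (-γ) ≤ (4⁻¹ * (1 + η ^ 2)) ^ (-γ) :=
            rpow_le_rpow_of_nonpos (by positivity) (by linarith) (by linarith)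
        _ = 4 ^ γ * (1 + η ^ 2) ^ (-γ) := by
            rw [mul_rpow (by norm_num) hz.le, inv_rpow (by norm_num), ← rpow_neg (by norm_num),
              neg_neg]
        _ ≤ 4 * (1 + η ^ 2) ^ (-γ) := by
            gcongr
            exact rpow_le_self_of_one_le (by norm_num) hγ₁
    calc (1 + u ^ 2) ^ (-γ) * (1 + (η - u) ^ 2)⁻¹
        ≤ 4 * (1 + η ^ 2) ^ (-γ) * (1 + (η - u) ^ 2)⁻¹ := by gcongr
      _ ≤ _ := by gcongr; linarith [inv_pos.2 hx]
  · have hxz : 1 + u ^ 2 ≤ 1 + η ^ 2 := by nlinarith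
    have hzy : 1 + η ^ 2 ≤ 4 * (1 + (η - u) ^ 2) := by nlinarith [sq_nonneg (η - 2 * u)]
    calc (1 + u ^ 2) ^ (-γ) * (1 + (η - u) ^ 2)⁻¹
        = (1 + u ^ 2) ^ (1 - γ) * (1 + u ^ 2)⁻¹ * (1 + (η - u) ^ 2)⁻¹ := by
          rw [rpow_sub hx, rpow_one, rpow_neg hx.le]; field_simp
      _ ≤ (1 + η ^ 2) ^ (1 - γ) * (1 + u ^ 2)⁻¹ * (4 * (1 + η ^ 2)⁻¹) := by
          gcongr
          rw [← div_eq_mul_inv, le_div_iff₀ hz, inv_mul_eq_div, div_le_iff₀ hy]; linarith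
      _ = 4 * (1 + η ^ 2) ^ (-γ) * (1 + u ^ 2)⁻¹ := by
          rw [rpow_sub hz, rpow_one, rpow_neg hz.le]; field_simp
      _ ≤ _ := by gcongr; linarith [inv_pos.2 hy]

lemma integrable_one_add_sq_rpow {s : ℝ} (hs : s < -(1 / 2)) :
    Integrable fun v : ℝ => (1 + v ^ 2) ^ s := by
  have := integrable_rpow_neg_one_add_norm_sq (E := ℝ) (μ := volume) (r := -2 * s)
    (by simp; linarith)
  simpa [neg_div] using this

lemma integral_one_add_sq_rpow_pos {s : ℝ} (hs : s < -(1 / 2)) :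
    0 < ∫ v : ℝ, (1 + v ^ 2) ^ s := by
  have hne (v : ℝ) : (1 + v ^ 2) ^ s ≠ 0 := (rpow_pos_of_pos (by positivity) s).ne'
  rw [integral_pos_iff_support_of_nonneg (fun v => by positivity) (integrable_one_add_sq_rpow hs)]
  simp [Function.support, hne]

lemma integrable_and_integral_le_of_le {f g : ℝ → ℝ} (hf : Continuous f) (hf₀ : 0 ≤ f)
    (hg : Integrable g) (hfg : f ≤ g) : Integrable f ∧ ∫ u, f u ≤ ∫ u, g u :=
  ⟨hg.mono' hf.aestronglyMeasurable <|
      ae_of_all _ fun u => (norm_of_nonneg (hf₀ u)).trans_le (hfg u),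
    integral_mono_of_nonneg (ae_of_all _ hf₀) hg (ae_of_all _ hfg)⟩

lemma continuous_one_add_sq_rpow_mul_inv (γ η : ℝ) :
    Continuous fun u : ℝ => (1 + u ^ 2) ^ (-γ) * (1 + (η - u) ^ 2)⁻¹ := by
  have hx (u : ℝ) : 1 + u ^ 2 ≠ 0 := by positivity
  have hy (u : ℝ) : 1 + (η - u) ^ 2 ≠ 0 := by positivity
  exact ((continuous_const.add (continuous_pow 2)).rpow_const fun u => Or.inl (hx u)).mul
      ((continuous_const.add ((continuous_const.sub continuous_id).pow 2)).inv₀ hy)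

lemma integrable_and_integral_le_of_nonneg {γ : ℝ} (hγ₀ : 0 ≤ γ) (hγ₁ : γ ≤ 1) (η : ℝ) :
    Integrable (fun u : ℝ => (1 + u ^ 2) ^ (-γ) * (1 + (η - u) ^ 2)⁻¹) ∧
      ∫ u : ℝ, (1 + u ^ 2) ^ (-γ) * (1 + (η - u) ^ 2)⁻¹ ≤ 8 * π * (1 + η ^ 2) ^ (-γ) := by
  have hcauchy := integrable_inv_one_add_sq
  have hsum : Integrable fun u : ℝ => (1 + u ^ 2)⁻¹ + (1 + (η - u) ^ 2)⁻¹ :=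
    hcauchy.add (hcauchy.comp_sub_left η)
  obtain ⟨hF, hle⟩ := integrable_and_integral_le_of_le (continuous_one_add_sq_rpow_mul_inv γ η)
    (fun u => by positivity) (hsum.const_mul _)
    (one_add_sq_rpow_neg_mul_inv_le hγ₀ hγ₁ η)
  refine ⟨hF, hle.trans_eq ?_⟩
  rw [integral_const_mul, integral_add hcauchy (hcauchy.comp_sub_left η),
    integral_sub_left_eq_self (fun v => (1 + v ^ 2)⁻¹), integral_univ_inv_one_add_sq]
  ring

lemma integrable_and_integral_le_of_nonpos {γ : ℝ} (hγ₀ : -(1 / 2) < γ) (hγ₁ : γ ≤ 0) (η : ℝ) :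
    Integrable (fun u : ℝ => (1 + u ^ 2) ^ (-γ) * (1 + (η - u) ^ 2)⁻¹) ∧
      ∫ u : ℝ, (1 + u ^ 2) ^ (-γ) * (1 + (η - u) ^ 2)⁻¹ ≤
        2 ^ (-γ) * (∫ v : ℝ, (1 + v ^ 2) ^ (-γ - 1)) * (1 + η ^ 2) ^ (-γ) := by
  have hint := integrable_one_add_sq_rpow (s := -γ - 1) (by linarith)
  have hpt (u : ℝ) : (1 + u ^ 2) ^ (-γ) * (1 + (η - u) ^ 2)⁻¹ ≤
      2 ^ (-γ) * (1 + η ^ 2) ^ (-γ) * (1 + (η - u) ^ 2) ^ (-γ - 1) := by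
    have hy : 0 < 1 + (η - u) ^ 2 := by positivity
    have := one_add_sq_rpow_le u η (-γ)
    rw [abs_of_nonneg (neg_nonneg.2 hγ₁), sub_sq_comm] at this
    calc (1 + u ^ 2) ^ (-γ) * (1 + (η - u) ^ 2)⁻¹
        ≤ 2 ^ (-γ) * (1 + η ^ 2) ^ (-γ) * (1 + (η - u) ^ 2) ^ (-γ) * (1 + (η - u) ^ 2)⁻¹ := by
          gcongr
      _ = _ := by rw [rpow_sub_one hy.ne']; field_simp
  obtain ⟨hF, hle⟩ := integrable_and_integral_le_of_le (continuous_one_add_sq_rpow_mul_inv γ η)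
    (fun u => by positivity) ((hint.comp_sub_left η).const_mul _) hpt
  refine ⟨hF, hle.trans_eq ?_⟩
  rw [integral_const_mul, integral_sub_left_eq_self (fun v => (1 + v ^ 2) ^ (-γ - 1))]
  ring

lemma mul_le_integral (γ η : ℝ)
    (hF : Integrable (fun u : ℝ => (1 + u ^ 2) ^ (-γ) * (1 + (η - u) ^ 2)⁻¹)) :
    2 ^ (-|γ|) * (∫ v : ℝ, (1 + v ^ 2) ^ (-|γ| - 1)) * (1 + η ^ 2) ^ (-γ) ≤
      ∫ u : ℝ, (1 + u ^ 2) ^ (-γ) * (1 + (η - u) ^ 2)⁻¹ := by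
  have hpt (u : ℝ) : 2 ^ (-|γ|) * (1 + η ^ 2) ^ (-γ) * (1 + (η - u) ^ 2) ^ (-|γ| - 1) ≤
      (1 + u ^ 2) ^ (-γ) * (1 + (η - u) ^ 2)⁻¹ := by
    have hy : 0 < 1 + (η - u) ^ 2 := by positivity
    have := one_add_sq_rpow_le η u (-γ)
    rw [abs_neg] at this
    calc 2 ^ (-|γ|) * (1 + η ^ 2) ^ (-γ) * (1 + (η - u) ^ 2) ^ (-|γ| - 1)
        ≤ 2 ^ (-|γ|) * (2 ^ |γ| * (1 + u ^ 2) ^ (-γ) * (1 + (η - u) ^ 2) ^ |γ|) *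
            (1 + (η - u) ^ 2) ^ (-|γ| - 1) := by
          gcongr
      _ = _ := by
          rw [rpow_sub_one hy.ne', rpow_neg (by norm_num), rpow_neg hy.le]; field_simp
  calc 2 ^ (-|γ|) * (∫ v : ℝ, (1 + v ^ 2) ^ (-|γ| - 1)) * (1 + η ^ 2) ^ (-γ)
      = ∫ u : ℝ, 2 ^ (-|γ|) * (1 + η ^ 2) ^ (-γ) * (1 + (η - u) ^ 2) ^ (-|γ| - 1) := by
        rw [integral_const_mul, integral_sub_left_eq_self (fun v => (1 + v ^ 2) ^ (-|γ| - 1))]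
        ring
    _ ≤ _ := integral_mono_of_nonneg (ae_of_all _ fun u => by positivity) hF (ae_of_all _ hpt)

/-- For `γ ∈ (-1/2, 1]` there exist `c₁(γ), c₂(γ) > 0` such that for all `η ∈ ℝ`,
`c₁ (1+η²)^{-γ} ≤ ∫_ℝ (1+u²)^{-γ} (1+(η-u)²)^{-1} du ≤ c₂ (1+η²)^{-γ}`. -/
theorem stmt_3 (γ : ℝ) (hγ : γ ∈ Set.Ioc (-(1/2) : ℝ) 1) :
    ∃ c₁ c₂ : ℝ, 0 < c₁ ∧ 0 < c₂ ∧ ∀ η : ℝ,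
      c₁ * (1 + η ^ 2) ^ (-γ) ≤
        (∫ u : ℝ, (1 + u ^ 2) ^ (-γ) * (1 + (η - u) ^ 2)⁻¹) ∧
      (∫ u : ℝ, (1 + u ^ 2) ^ (-γ) * (1 + (η - u) ^ 2)⁻¹) ≤
        c₂ * (1 + η ^ 2) ^ (-γ) := by
  obtain ⟨c₂, hc₂, hupper⟩ : ∃ c₂ : ℝ, 0 < c₂ ∧ ∀ η : ℝ,
      Integrable (fun u : ℝ => (1 + u ^ 2) ^ (-γ) * (1 + (η - u) ^ 2)⁻¹) ∧
      ∫ u : ℝ, (1 + u ^ 2) ^ (-γ) * (1 + (η - u) ^ 2)⁻¹ ≤ c₂ * (1 + η ^ 2) ^ (-γ) := by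
    rcases le_total 0 γ with hγ₀ | hγ₀
    · exact ⟨8 * π, by positivity, integrable_and_integral_le_of_nonneg hγ₀ hγ.2⟩
    · exact ⟨_, mul_pos (by positivity) (integral_one_add_sq_rpow_pos (by linarith [hγ.1])),
        integrable_and_integral_le_of_nonpos hγ.1 hγ₀⟩
  have hc₁ : 0 < 2 ^ (-|γ|) * ∫ v : ℝ, (1 + v ^ 2) ^ (-|γ| - 1) :=
    mul_pos (by positivity) (integral_one_add_sq_rpow_pos (by linarith [abs_nonneg γ]))
  exact ⟨_, c₂, hc₁, hc₂, fun η => ⟨mul_le_integral γ η (hupper η).1, (hupper η).2⟩⟩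
end

section
/- Suppose f is absolutely continuous on [0,1], f ∈ L^2[0,1], and f' = l₁ + l₂ with l₁ ∈ L^1[0,1] and l₂ ∈ L^2[0,1]. Set δ = ‖f‖_{L^2[0,1]}, ε = ‖l₁‖_{L^1[0,1]}, τ = ‖l₂‖_{L^2[0,1]}. Then ‖f‖_{L^∞[0,1]} ≤ √(δ² + 2(δτ + ε(τ + ε + δ))). -/
/-!
Pick `y` with `‖f y‖² ≤ ∫ ‖f‖² = δ²` (first moment method). Since `f` is a primitive of
`g = l₁ + l₂`, the product rule for absolutely continuous functions gives
`‖f x‖² = ‖f y‖² + 2 ∫_y^x Re (conj f · g)`. Against `l₁` we bound `f` by its supremum,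
which is at most `‖f y‖ + ‖g‖₁ ≤ δ + ε + τ`; against `l₂` we use Cauchy–Schwarz, which costs
`δ τ`. Hence `‖f x‖² ≤ δ² + 2 ((δ + ε + τ) ε + δ τ)`.
-/

open MeasureTheory intervalIntegral Set
open scoped ComplexConjugate

section SquareIntegrable

variable {X E : Type*} [MeasurableSpace X] [NormedAddCommGroup E] {μ : Measure X}

theorem integral_norm_mul_norm_le_sqrt_mul_sqrt {u v : X → E}
    (hu : AEStronglyMeasurable u μ) (hv : AEStronglyMeasurable v μ)
    (hu2 : Integrable (fun x => ‖u x‖ ^ 2) μ) (hv2 : Integrable (fun x => ‖v x‖ ^ 2) μ) :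
    ∫ x, ‖u x‖ * ‖v x‖ ∂μ ≤ √(∫ x, ‖u x‖ ^ 2 ∂μ) * √(∫ x, ‖v x‖ ^ 2 ∂μ) := by
  have hmem : ∀ {w : X → E}, AEStronglyMeasurable w μ → Integrable (fun x => ‖w x‖ ^ 2) μ →
      MemLp w (ENNReal.ofReal 2) μ := fun hw hw2 => by
    rw [ENNReal.ofReal_ofNat]; exact (memLp_two_iff_integrable_sq_norm hw).2 hw2
  have hsqrt : ∀ w : X → E, (∫ x, ‖w x‖ ^ (2 : ℝ) ∂μ) ^ (1 / 2 : ℝ) = √(∫ x, ‖w x‖ ^ 2 ∂μ) :=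
    fun w => by simp only [Real.rpow_two, Real.sqrt_eq_rpow, one_div]
  simpa only [hsqrt] using
    integral_mul_norm_le_Lp_mul_Lq Real.HolderConjugate.two_two (hmem hu hu2) (hmem hv hv2)

theorem setIntegral_norm_le_sqrt_setIntegral_sq {s : Set X} (hs : μ s = 1) {v : X → E}
    (hv : AEStronglyMeasurable v (μ.restrict s))
    (hv2 : IntegrableOn (fun x => ‖v x‖ ^ 2) s μ) :
    ∫ x in s, ‖v x‖ ∂μ ≤ √(∫ x in s, ‖v x‖ ^ 2 ∂μ) := by
  have : IsProbabilityMeasure (μ.restrict s) := ⟨by rw [Measure.restrict_apply_univ, hs]⟩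
  simpa using integral_norm_mul_norm_le_sqrt_mul_sqrt (u := fun _ => (1 : ℝ))
    (v := fun x => ‖v x‖) aestronglyMeasurable_const hv.norm (by simp)
    (by simp only [norm_norm]; exact hv2)

theorem exists_mem_norm_le_sqrt_setIntegral_sq {s : Set X} (hs : μ s = 1) {v : X → E}
    (hv2 : IntegrableOn (fun x => ‖v x‖ ^ 2) s μ) :
    ∃ y ∈ s, ‖v y‖ ≤ √(∫ x in s, ‖v x‖ ^ 2 ∂μ) := by
  obtain ⟨y, hy, hle⟩ := exists_le_setAverage (by simp [hs]) (by simp [hs]) hv2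
  rw [setAverage_eq, measureReal_def, hs] at hle
  exact ⟨y, hy, Real.le_sqrt_of_sq_le (by simpa using hle)⟩

end SquareIntegrable

section Primitive

variable {a b : ℝ}

theorem continuousOn_of_forall_eq_add_intervalIntegral {E : Type*} [NormedAddCommGroup E]
    [NormedSpace ℝ E] {F g : ℝ → E} (hg : IntervalIntegrable g volume a b)
    (hF : ∀ t ∈ uIcc a b, F t = F a + ∫ s in a..t, g s) : ContinuousOn F (uIcc a b) :=
  (continuousOn_const.add (continuousOn_primitive_interval' hg left_mem_uIcc)).congr hF

theorem sq_eq_sq_add_intervalIntegral_mul {U φ : ℝ → ℝ} (hφ : IntervalIntegrable φ volume a b)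
    (hU : ∀ t ∈ uIcc a b, U t = U a + ∫ s in a..t, φ s) :
    U b ^ 2 = U a ^ 2 + 2 * ∫ t in a..b, U t * φ t := by
  set V : ℝ → ℝ := fun x => U a + ∫ s in a..x, φ s
  have hV : AbsolutelyContinuousOnInterval V a b :=
    ((LipschitzWith.const (U a)).lipschitzOnWith.absolutelyContinuousOnInterval).add
      (hφ.absolutelyContinuousOnInterval_intervalIntegral left_mem_uIcc)
  have hV' : ∀ᵐ x, x ∈ uIoc a b → deriv V x * V x + V x * deriv V x = 2 * (U x * φ x) := by
    filter_upwards [hφ.ae_hasDerivAt_integral] with x hx hxab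
    rw [((hx (uIoc_subset_uIcc hxab) a left_mem_uIcc).const_add (U a)).deriv,
      hU x (uIoc_subset_uIcc hxab)]
    ring
  have := hV.integral_deriv_mul_eq_sub hV
  rw [integral_congr_ae hV', intervalIntegral.integral_const_mul] at this
  simp only [V, integral_same, add_zero, ← hU b right_mem_uIcc] at this
  linarith

theorem norm_sq_eq_norm_sq_add_intervalIntegral_re {𝕜 : Type*} [RCLike 𝕜] {F g : ℝ → 𝕜}
    (hg : IntervalIntegrable g volume a b)
    (hF : ∀ t ∈ uIcc a b, F t = F a + ∫ s in a..t, g s) :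
    ‖F b‖ ^ 2 = ‖F a‖ ^ 2 + 2 * ∫ t in a..b, RCLike.re (conj (F t) * g t) := by
  have hgt : ∀ t ∈ uIcc a b, IntervalIntegrable g volume a t := fun t ht =>
    hg.mono_set (uIcc_subset_uIcc_left ht)
  have hF_cont := continuousOn_of_forall_eq_add_intervalIntegral hg hF
  have hre_int : IntervalIntegrable (fun t => RCLike.re (g t)) volume a b := ⟨hg.1.re, hg.2.re⟩
  have him_int : IntervalIntegrable (fun t => RCLike.im (g t)) volume a b := ⟨hg.1.im, hg.2.im⟩
  have hre := sq_eq_sq_add_intervalIntegral_mul hre_int (U := fun t => RCLike.re (F t))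
    fun t ht => by rw [hF t ht, map_add, intervalIntegral_re (hgt t ht)]
  have him := sq_eq_sq_add_intervalIntegral_mul him_int (U := fun t => RCLike.im (F t))
    fun t ht => by rw [hF t ht, map_add, intervalIntegral_im (hgt t ht)]
  have hsum : ∫ t in a..b, RCLike.re (conj (F t) * g t)
      = (∫ t in a..b, RCLike.re (F t) * RCLike.re (g t))
        + ∫ t in a..b, RCLike.im (F t) * RCLike.im (g t) := by
    have hFre : ContinuousOn (fun t => RCLike.re (F t)) (uIcc a b) :=
      RCLike.continuous_re.comp_continuousOn hF_cont
    have hFim : ContinuousOn (fun t => RCLike.im (F t)) (uIcc a b) :=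
      RCLike.continuous_im.comp_continuousOn hF_cont
    rw [← integral_add (hre_int.continuousOn_mul hFre) (him_int.continuousOn_mul hFim)]
    simp only [RCLike.mul_re, RCLike.conj_re, RCLike.conj_im, neg_mul, sub_neg_eq_add]
  rw [RCLike.norm_sq_eq_def, RCLike.norm_sq_eq_def, hsum, ← sq, ← sq, ← sq, ← sq]
  linarith

end Primitive

theorem norm_intervalIntegral_le_setIntegral_Icc {E : Type*} [NormedAddCommGroup E]
    [NormedSpace ℝ E] {h : ℝ → E} {k : ℝ → ℝ} {p q a b : ℝ} (ha : a ∈ Icc p q)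
    (hb : b ∈ Icc p q) (hk : IntegrableOn k (Icc p q)) (hhk : ∀ t ∈ Icc p q, ‖h t‖ ≤ k t) :
    ‖∫ t in a..b, h t‖ ≤ ∫ t in Icc p q, k t := by
  have hsub : uIoc a b ⊆ Icc p q := uIoc_subset_uIcc.trans (uIcc_subset_Icc ha hb)
  rw [norm_integral_eq_norm_integral_uIoc]
  calc _ ≤ ∫ t in uIoc a b, k t :=
        norm_integral_le_of_norm_le (hk.mono_set hsub)
          (ae_restrict_of_forall_mem measurableSet_uIoc fun t ht => hhk t (hsub ht))
    _ ≤ ∫ t in Icc p q, k t :=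
        setIntegral_mono_set hk (ae_restrict_of_forall_mem measurableSet_Icc
          fun t ht => (norm_nonneg _).trans (hhk t ht)) hsub.eventuallyLE

theorem abs_intervalIntegral_re_conj_mul_add_le {𝕜 : Type*} [RCLike 𝕜] {F l₁ l₂ : ℝ → 𝕜}
    {p q a b M : ℝ} (ha : a ∈ Icc p q) (hb : b ∈ Icc p q)
    (hF : AEStronglyMeasurable F (volume.restrict (Icc p q)))
    (hFM : ∀ t ∈ Icc p q, ‖F t‖ ≤ M) (hF2 : IntegrableOn (fun t => ‖F t‖ ^ 2) (Icc p q))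
    (hl₁ : IntegrableOn l₁ (Icc p q)) (hl₂ : IntegrableOn l₂ (Icc p q))
    (hl₂sq : IntegrableOn (fun t => ‖l₂ t‖ ^ 2) (Icc p q)) :
    |∫ t in a..b, RCLike.re (conj (F t) * (l₁ t + l₂ t))|
      ≤ M * (∫ t in Icc p q, ‖l₁ t‖)
        + √(∫ t in Icc p q, ‖F t‖ ^ 2) * √(∫ t in Icc p q, ‖l₂ t‖ ^ 2) := by
  have h₁ : IntegrableOn (fun t => M * ‖l₁ t‖) (Icc p q) := hl₁.norm.const_mul M
  have h₂ : IntegrableOn (fun t => ‖F t‖ * ‖l₂ t‖) (Icc p q) :=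
    hl₂.norm.bdd_mul hF.norm (ae_restrict_of_forall_mem measurableSet_Icc (by simpa using hFM))
  have hpt : ∀ t ∈ Icc p q, ‖RCLike.re (conj (F t) * (l₁ t + l₂ t))‖
      ≤ M * ‖l₁ t‖ + ‖F t‖ * ‖l₂ t‖ := fun t ht =>
    calc _ ≤ ‖conj (F t) * (l₁ t + l₂ t)‖ := RCLike.norm_re_le_norm _
      _ ≤ ‖F t‖ * (‖l₁ t‖ + ‖l₂ t‖) := by
          rw [norm_mul, RCLike.norm_conj]; gcongr; exact norm_add_le _ _
      _ ≤ M * ‖l₁ t‖ + ‖F t‖ * ‖l₂ t‖ := by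
          rw [mul_add]; gcongr; exact hFM t ht
  calc _ = ‖∫ t in a..b, RCLike.re (conj (F t) * (l₁ t + l₂ t))‖ := (Real.norm_eq_abs _).symm
    _ ≤ ∫ t in Icc p q, (M * ‖l₁ t‖ + ‖F t‖ * ‖l₂ t‖) :=
        norm_intervalIntegral_le_setIntegral_Icc ha hb (h₁.add h₂) hpt
    _ = M * (∫ t in Icc p q, ‖l₁ t‖) + ∫ t in Icc p q, ‖F t‖ * ‖l₂ t‖ := by
        rw [integral_add h₁ h₂, MeasureTheory.integral_const_mul]
    _ ≤ _ := add_le_add_right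
        (integral_norm_mul_norm_le_sqrt_mul_sqrt hF hl₂.aestronglyMeasurable hF2 hl₂sq) _

/-- Suppose `f` is absolutely continuous on `[0,1]` (expressed via the integral
identity `f x = f 0 + ∫₀ˣ (l₁ + l₂)`), `f ∈ L²[0,1]`, `l₁ ∈ L¹[0,1]`, `l₂ ∈ L²[0,1]`.
With `δ = ‖f‖_{L²[0,1]}`, `ε = ‖l₁‖_{L¹[0,1]}`, `τ = ‖l₂‖_{L²[0,1]}`, we have
`‖f‖_{L^∞[0,1]} ≤ √(δ² + 2(δτ + ε(τ + ε + δ)))` (stated pointwise, `f` being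
continuous). -/
theorem stmt_4 (f l₁ l₂ : ℝ → ℂ)
    (hl₁ : IntegrableOn l₁ (Set.Icc (0 : ℝ) 1) volume)
    (hl₂ : IntegrableOn l₂ (Set.Icc (0 : ℝ) 1) volume)
    (hl₂sq : IntegrableOn (fun x => ‖l₂ x‖ ^ 2) (Set.Icc (0 : ℝ) 1) volume)
    (hfsq : IntegrableOn (fun x => ‖f x‖ ^ 2) (Set.Icc (0 : ℝ) 1) volume)
    (hAC : ∀ x ∈ Set.Icc (0 : ℝ) 1, f x = f 0 + ∫ t in (0 : ℝ)..x, (l₁ t + l₂ t))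
    (δ ε τ : ℝ)
    (hδ : δ = Real.sqrt (∫ x in Set.Icc (0 : ℝ) 1, ‖f x‖ ^ 2))
    (hε : ε = ∫ x in Set.Icc (0 : ℝ) 1, ‖l₁ x‖)
    (hτ : τ = Real.sqrt (∫ x in Set.Icc (0 : ℝ) 1, ‖l₂ x‖ ^ 2)) :
    ∀ x ∈ Set.Icc (0 : ℝ) 1,
      ‖f x‖ ≤ Real.sqrt (δ ^ 2 + 2 * (δ * τ + ε * (τ + ε + δ))) := by
  intro x hx
  set g : ℝ → ℂ := fun t => l₁ t + l₂ t
  have hg : ∀ a ∈ Icc (0 : ℝ) 1, ∀ b ∈ Icc (0 : ℝ) 1, IntervalIntegrable g volume a b :=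
    fun a ha b hb => ((hl₁.add hl₂).mono_set (uIcc_subset_Icc ha hb)).intervalIntegrable
  have h0 : (0 : ℝ) ∈ Icc (0 : ℝ) 1 := ⟨le_rfl, zero_le_one⟩
  have hf_eq : ∀ y ∈ Icc (0 : ℝ) 1, ∀ z ∈ Icc (0 : ℝ) 1, f z = f y + ∫ t in y..z, g t :=
    fun y hy z hz => by
      rw [hAC z hz, hAC y hy, add_assoc,
        integral_add_adjacent_intervals (hg 0 h0 y hy) (hg y hy z hz)]
  have hvol : volume (Icc (0 : ℝ) 1) = 1 := by simp
  have hf_meas : AEStronglyMeasurable f (volume.restrict (Icc (0 : ℝ) 1)) := by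
    rw [← uIcc_of_le zero_le_one] at hAC ⊢
    exact (continuousOn_of_forall_eq_add_intervalIntegral (hg 0 h0 1 ⟨zero_le_one, le_rfl⟩)
      hAC).aestronglyMeasurable measurableSet_uIcc
  obtain ⟨y, hy, hfy⟩ := exists_mem_norm_le_sqrt_setIntegral_sq hvol hfsq
  rw [← hδ] at hfy
  have hl₂τ : ∫ t in Icc (0 : ℝ) 1, ‖l₂ t‖ ≤ τ :=
    hτ ▸ setIntegral_norm_le_sqrt_setIntegral_sq hvol hl₂.aestronglyMeasurable hl₂sq
  have hsup : ∀ z ∈ Icc (0 : ℝ) 1, ‖f z‖ ≤ δ + ε + τ := fun z hz =>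
    calc ‖f z‖ ≤ ‖f y‖ + ‖∫ t in y..z, g t‖ := hf_eq y hy z hz ▸ norm_add_le _ _
      _ ≤ δ + ∫ t in Icc (0 : ℝ) 1, (‖l₁ t‖ + ‖l₂ t‖) := by
          gcongr
          exact norm_intervalIntegral_le_setIntegral_Icc hy hz (hl₁.norm.add hl₂.norm)
            fun t _ => norm_add_le _ _
      _ ≤ δ + ε + τ := by
          rw [integral_add hl₁.norm hl₂.norm, ← hε]; linarith
  have hcross : |∫ t in y..x, RCLike.re (conj (f t) * g t)| ≤ (δ + ε + τ) * ε + δ * τ := by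
    subst hδ hε hτ
    exact abs_intervalIntegral_re_conj_mul_add_le hy hx hf_meas hsup hfsq hl₁ hl₂ hl₂sq
  have henergy := norm_sq_eq_norm_sq_add_intervalIntegral_re (hg y hy x hx)
    fun t ht => hf_eq y hy t (uIcc_subset_Icc hy hx ht)
  have hfy2 : ‖f y‖ ^ 2 ≤ δ ^ 2 := pow_le_pow_left₀ (norm_nonneg _) hfy 2
  apply Real.le_sqrt_of_sq_le
  linarith [(abs_le.mp hcross).2]
end

section
/- Let V: [0,1] → M₂(ℝ) be integrable with V = Vᵀ and tr V = 0, and let N solve N' = VN with N(0) = I. Set H = NᵀN. Let U₊(x,y) be the solution of ∂ₓU₊(x,y) = V(x)U₊(x,y) with U₊(y,y) = I. Then det(∫₀¹ H(ξ) dξ) = (1/2) ∫₀¹∫₀¹ ‖U₊(x,y)‖²_{HS} dx dy, where ‖·‖_{HS} is the Hilbert–Schmidt norm. -/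
open MeasureTheory Matrix intervalIntegral

attribute [local instance] Matrix.normedAddCommGroup Matrix.normedSpace

open Set Filter Topology

/-!
For a trace-free `2 × 2` matrix `adj V = -V`, so for any two solutions `W₁, W₂` of `W' = V W`
the product `adj W₁ · W₂` has derivative `adj W₁ (adj V + V) W₂ = 0` and is constant. With
`W₁ = W₂ = N` this gives `det N = 1`, and with `W₁ = N`, `W₂ = U₊(·, y)` it gives
`U₊(x, y) = N(x) adj N(y)`. Hence `‖U₊(x, y)‖²_HS = tr (H(x) adj H(y))` for `H = NᵀN`, and since
`adj` is linear on `2 × 2` matrices, its integral over the square is `tr (A adj A) = 2 det A`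
for `A = ∫ H`.

Analytically, `V` is only integrable, so solutions are taken in integral form; they are
absolutely continuous with the expected derivative almost everywhere, once one knows that the
integrand `V W` is integrable at all, which a continuation argument on the maximal interval of
integrability provides.
-/

namespace AbsolutelyContinuousOnInterval

variable {X Y : Type*} [PseudoMetricSpace X] [PseudoMetricSpace Y] {a b : ℝ}

theorem of_dist_le {f : ℝ → X} {g : ℝ → Y} (K : ℝ) (hg : AbsolutelyContinuousOnInterval g a b)
    (h : ∀ x ∈ uIcc a b, ∀ y ∈ uIcc a b, dist (f x) (f y) ≤ K * dist (g x) (g y)) :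
    AbsolutelyContinuousOnInterval f a b := by
  unfold AbsolutelyContinuousOnInterval at hg ⊢
  refine squeeze_zero' (Eventually.of_forall fun _ ↦ Finset.sum_nonneg fun _ _ ↦ dist_nonneg) ?_
    (by simpa using hg.const_mul K)
  filter_upwards [eventually_inf_principal.mpr (Eventually.of_forall fun E hE ↦ hE)] with E hE
  rw [Finset.mul_sum]
  exact Finset.sum_le_sum fun i hi ↦ h _ (hE.1 i hi).1 _ (hE.1 i hi).2

theorem prodMk {f : ℝ → X} {g : ℝ → Y} (hf : AbsolutelyContinuousOnInterval f a b)
    (hg : AbsolutelyContinuousOnInterval g a b) :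
    AbsolutelyContinuousOnInterval (fun x ↦ (f x, g x)) a b := by
  unfold AbsolutelyContinuousOnInterval at hf hg ⊢
  refine squeeze_zero (fun _ ↦ Finset.sum_nonneg fun _ _ ↦ dist_nonneg) (fun _ ↦ ?_)
    (by simpa using hf.add hg)
  rw [← Finset.sum_add_distrib]
  exact Finset.sum_le_sum fun _ _ ↦ max_le_add_of_nonneg dist_nonneg dist_nonneg

end AbsolutelyContinuousOnInterval

theorem IntervalIntegrable.of_mem_Icc {E : Type*} [NormedAddCommGroup E] {f : ℝ → E} {a b x y : ℝ}
    (hf : IntervalIntegrable f volume a b) (hx : x ∈ Icc a b) (hy : y ∈ Icc a b) :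
    IntervalIntegrable f volume x y :=
  hf.mono_set (uIcc_subset_uIcc (Icc_subset_uIcc hx) (Icc_subset_uIcc hy))

section Normed

variable {E F G : Type*} [NormedAddCommGroup E] [NormedSpace ℝ E] [NormedAddCommGroup F]
  [NormedSpace ℝ F] [NormedAddCommGroup G] [NormedSpace ℝ G] {a b : ℝ}

theorem AbsolutelyContinuousOnInterval.clm_apply₂ (B : E →L[ℝ] F →L[ℝ] G) {f : ℝ → E}
    {g : ℝ → F} (hf : AbsolutelyContinuousOnInterval f a b)
    (hg : AbsolutelyContinuousOnInterval g a b) :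
    AbsolutelyContinuousOnInterval (fun x ↦ B (f x) (g x)) a b := by
  obtain ⟨Rf, hRf⟩ := hf.exists_bound
  obtain ⟨Rg, hRg⟩ := hg.exists_bound
  refine (hf.prodMk hg).of_dist_le (‖B‖ * (Rf + Rg)) fun x hx y hy ↦ ?_
  have hsplit : B (f x) (g x) - B (f y) (g y) = B (f x - f y) (g x) + B (f y) (g x - g y) := by
    simp only [map_sub, _root_.sub_apply]; abel
  have hbound : ‖f x - f y‖ * ‖g x‖ + ‖f y‖ * ‖g x - g y‖ ≤
      (Rf + Rg) * dist (f x, g x) (f y, g y) := by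
    rw [Prod.dist_eq, dist_eq_norm, dist_eq_norm]
    nlinarith [le_max_left ‖f x - f y‖ ‖g x - g y‖, le_max_right ‖f x - f y‖ ‖g x - g y‖,
      norm_nonneg (f x - f y), norm_nonneg (g x - g y), hRf y hy, hRg x hx, norm_nonneg (f y),
      norm_nonneg (g x)]
  calc dist (B (f x) (g x)) (B (f y) (g y))
      ≤ ‖B‖ * ‖f x - f y‖ * ‖g x‖ + ‖B‖ * ‖f y‖ * ‖g x - g y‖ := by
        rw [dist_eq_norm, hsplit]
        exact (norm_add_le _ _).trans (add_le_add (B.le_opNorm₂ _ _) (B.le_opNorm₂ _ _))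
    _ ≤ ‖B‖ * (Rf + Rg) * dist (f x, g x) (f y, g y) := by
        rw [mul_assoc, mul_assoc, mul_assoc, ← mul_add]
        exact mul_le_mul_of_nonneg_left hbound (norm_nonneg B)

theorem IntervalIntegrable.absolutelyContinuousOnInterval_primitive {f : ℝ → E} {c : ℝ}
    (hf : IntervalIntegrable f volume a b) (hc : c ∈ uIcc a b) :
    AbsolutelyContinuousOnInterval (fun x ↦ ∫ t in c..x, f t) a b := by
  refine (hf.norm.absolutelyContinuousOnInterval_intervalIntegral hc).of_dist_le 1
    fun x hx y hy ↦ ?_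
  have hI : ∀ z ∈ uIcc a b, IntervalIntegrable f volume c z := fun z hz ↦
    hf.mono_set (uIcc_subset_uIcc hc hz)
  rw [one_mul, dist_eq_norm', dist_eq_norm', integral_interval_sub_left (hI y hy) (hI x hx),
    integral_interval_sub_left (hI y hy).norm (hI x hx).norm, Real.norm_eq_abs]
  exact norm_integral_le_abs_integral_norm

theorem IntervalIntegrable.tendsto_integral_nhdsLT {f : ℝ → E} (hab : a < b)
    (hf : IntervalIntegrable f volume a b) :
    Tendsto (fun t ↦ ∫ u in t..b, f u) (𝓝[<] b) (𝓝 0) := by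
  have hcont := (continuousOn_primitive_interval_left
    (Iff.mp intervalIntegrable_iff' hf) b right_mem_uIcc).tendsto
  rw [uIcc_of_le hab.le, integral_same] at hcont
  rw [← nhdsWithin_Ioo_eq_nhdsLT hab]
  exact hcont.mono_left (nhdsWithin_mono _ Ioo_subset_Icc_self)

end Normed

theorem continuousOn_Ico_of_forall_Icc {α β : Type*} [LinearOrder α] [TopologicalSpace α]
    [OrderTopology α] [DenselyOrdered α] [TopologicalSpace β] {f : α → β} {a b : α}
    (h : ∀ x ∈ Ico a b, ContinuousOn f (Icc a x)) : ContinuousOn f (Ico a b) := fun p hp ↦ by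
  obtain ⟨q, hpq, hqb⟩ := exists_between hp.2
  refine ((h q ⟨hp.1.trans hpq.le, hqb⟩) p ⟨hp.1, hpq.le⟩).mono_of_mem_nhdsWithin ?_
  exact mem_nhdsWithin.2 ⟨Iio q, isOpen_Iio, hpq, fun r hr ↦ ⟨hr.2.1, hr.1.le⟩⟩

section IntegralEquation

variable {E F : Type*} [NormedAddCommGroup E] [NormedSpace ℝ E] [NormedAddCommGroup F]
  [NormedSpace ℝ F] (B : E →L[ℝ] F →L[ℝ] F) (V : ℝ → E) (W : ℝ → F)

/-- Integral form of `W' = B V W`, `W c = C` on `s`. The integral of a non-integrable function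
being `0`, this does not by itself make `B V W` integrable. -/
def IsIntegralSolution (C : F) (c : ℝ) (s : Set ℝ) : Prop :=
  ∀ x ∈ s, W x = C + ∫ t in c..x, B (V t) (W t)

variable {B V W} {C : F} {a b c : ℝ}

namespace IsIntegralSolution

theorem mono {s t : Set ℝ} (h : IsIntegralSolution B V W C c s) (hts : t ⊆ s) :
    IsIntegralSolution B V W C c t :=
  fun x hx ↦ h x (hts hx)

theorem rebase {s : Set ℝ} (h : IsIntegralSolution B V W C c s)
    (hf : ∀ x ∈ s, IntervalIntegrable (fun t ↦ B (V t) (W t)) volume c x) {d : ℝ} (hd : d ∈ s) :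
    IsIntegralSolution B V W (W d) d s := fun x hx ↦ by
  rw [h x hx, h d hd, add_assoc,
    integral_add_adjacent_intervals (hf d hd) ((hf d hd).symm.trans (hf x hx))]

theorem absolutelyContinuousOnInterval_of_intervalIntegrable
    (h : IsIntegralSolution B V W C c (Icc a b)) (hc : c ∈ Icc a b)
    (hf : IntervalIntegrable (fun t ↦ B (V t) (W t)) volume a b) :
    AbsolutelyContinuousOnInterval W a b := by
  have hab : a ≤ b := hc.1.trans hc.2
  refine (hf.absolutelyContinuousOnInterval_primitive (Icc_subset_uIcc hc)).of_dist_le 1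
    fun x hx y hy ↦ ?_
  rw [uIcc_of_le hab] at hx hy
  rw [h x hx, h y hy, dist_add_left, one_mul]

theorem norm_le_two_mul {s x : ℝ} (hsx : s ≤ x) (hV : IntervalIntegrable V volume s x)
    (hW : ContinuousOn W (Icc s x)) (h : IsIntegralSolution B V W (W s) s (Icc s x))
    (hsmall : ‖B‖ * ∫ t in s..x, ‖V t‖ ≤ 1 / 2) : ∀ p ∈ Icc s x, ‖W p‖ ≤ 2 * ‖W s‖ := by
  obtain ⟨ξ, hξ, hmax⟩ := isCompact_Icc.exists_isMaxOn (nonempty_Icc.2 hsx) hW.norm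
  have hsmallξ : ‖B‖ * ∫ t in s..ξ, ‖V t‖ ≤ 1 / 2 := by
    refine le_trans (mul_le_mul_of_nonneg_left ?_ (norm_nonneg B)) hsmall
    exact integral_mono_interval le_rfl hξ.1 hξ.2 (.of_forall fun _ ↦ norm_nonneg _) hV.norm
  have hξbound : ‖W ξ‖ ≤ ‖W s‖ + ‖W ξ‖ / 2 :=
    calc ‖W ξ‖ = ‖W s + ∫ t in s..ξ, B (V t) (W t)‖ := by rw [← h ξ hξ]
      _ ≤ ‖W s‖ + ∫ t in s..ξ, ‖B‖ * ‖W ξ‖ * ‖V t‖ := by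
        refine (norm_add_le _ _).trans (add_le_add le_rfl (norm_integral_le_of_norm_le hξ.1
          (.of_forall fun t ht ↦ ?_) ((hV.of_mem_Icc (left_mem_Icc.2 hsx) hξ).norm.const_mul _)))
        calc ‖B (V t) (W t)‖ ≤ ‖B‖ * ‖V t‖ * ‖W t‖ := B.le_opNorm₂ _ _
          _ ≤ ‖B‖ * ‖W ξ‖ * ‖V t‖ := by
            rw [mul_right_comm]
            gcongr
            exact hmax ⟨ht.1.le, ht.2.trans hξ.2⟩
      _ ≤ ‖W s‖ + ‖W ξ‖ / 2 := by
        rw [intervalIntegral.integral_const_mul, mul_right_comm]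
        nlinarith [norm_nonneg (W ξ)]
  exact fun p hp ↦ (show ‖W p‖ ≤ ‖W ξ‖ from hmax hp).trans (by linarith)

theorem intervalIntegrable_of_forall_lt (hab : a < b) (hV : IntervalIntegrable V volume a b)
    (h : IsIntegralSolution B V W C a (Icc a b))
    (hlt : ∀ x ∈ Ico a b, IntervalIntegrable (fun t ↦ B (V t) (W t)) volume a x) :
    IntervalIntegrable (fun t ↦ B (V t) (W t)) volume a b := by
  have hsmall : ∀ᶠ t in 𝓝[<] b, ‖B‖ * ∫ u in t..b, ‖V u‖ < 1 / 2 := by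
    have := (hV.norm.tendsto_integral_nhdsLT hab).const_mul ‖B‖
    rw [mul_zero] at this
    exact this.eventually (gt_mem_nhds one_half_pos)
  obtain ⟨t₀, ht₀small, ht₀⟩ := (hsmall.and (Ioo_mem_nhdsLT hab)).exists
  have hb : b ∈ Icc a b := right_mem_Icc.2 hab.le
  have hWcont : ∀ x ∈ Ico t₀ b, ContinuousOn W (Icc a x) := fun x hx ↦ by
    have hax : a ≤ x := ht₀.1.le.trans hx.1
    simpa [uIcc_of_le hax] using
      ((h.mono (Icc_subset_Icc_right hx.2.le)).absolutelyContinuousOnInterval_of_intervalIntegrable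
        (left_mem_Icc.2 hax) (hlt x ⟨hax, hx.2⟩)).continuousOn
  have hbound : ∀ p ∈ Ico t₀ b, ‖W p‖ ≤ 2 * ‖W t₀‖ := fun p hp ↦ by
    have hap : a ≤ p := ht₀.1.le.trans hp.1
    have hsub : Icc t₀ p ⊆ Icc a p := Icc_subset_Icc_left ht₀.1.le
    have hsol := (h.mono (Icc_subset_Icc_right hp.2.le)).rebase
      (fun x hx ↦ (hlt p ⟨hap, hp.2⟩).of_mem_Icc (left_mem_Icc.2 hap) hx)
      (hsub (left_mem_Icc.2 hp.1))
    have hVt₀ := hV.of_mem_Icc ⟨ht₀.1.le, ht₀.2.le⟩ hb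
    refine norm_le_two_mul hp.1 (hVt₀.of_mem_Icc (left_mem_Icc.2 ht₀.2.le) ⟨hp.1, hp.2.le⟩)
      ((hWcont p hp).mono hsub) (hsol.mono hsub)
      (le_trans (mul_le_mul_of_nonneg_left ?_ (norm_nonneg B)) ht₀small.le) p
      (right_mem_Icc.2 hp.1)
    exact integral_mono_interval le_rfl hp.1 hp.2.le (.of_forall fun _ ↦ norm_nonneg _) hVt₀.norm
  have hWIco : ContinuousOn W (Ico t₀ b) :=
    continuousOn_Ico_of_forall_Icc fun x hx ↦ (hWcont x hx).mono (Icc_subset_Icc_left ht₀.1.le)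
  have hVIco : IntegrableOn V (Ico t₀ b) := Iff.mp
    (intervalIntegrable_iff_integrableOn_Ico_of_le ht₀.2.le) (hV.of_mem_Icc ⟨ht₀.1.le, ht₀.2.le⟩ hb)
  have hf : IntegrableOn (fun t ↦ B (V t) (W t)) (Ico t₀ b) := by
    refine Integrable.mono' (hVIco.norm.const_mul (‖B‖ * (2 * ‖W t₀‖)))
      (B.aestronglyMeasurable_comp₂ hVIco.aestronglyMeasurable
        (hWIco.aestronglyMeasurable measurableSet_Ico))
      ((ae_restrict_iff' measurableSet_Ico).2 (.of_forall fun t ht ↦ ?_))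
    calc ‖B (V t) (W t)‖ ≤ ‖B‖ * ‖V t‖ * ‖W t‖ := B.le_opNorm₂ _ _
      _ ≤ ‖B‖ * (2 * ‖W t₀‖) * ‖V t‖ := by
        rw [mul_right_comm]; gcongr; exact hbound t ht
  exact (hlt t₀ ⟨ht₀.1.le, ht₀.2⟩).trans
    (Iff.mpr (intervalIntegrable_iff_integrableOn_Ico_of_le ht₀.2.le) hf)

theorem intervalIntegrable_of_left (hab : a ≤ b) (hV : IntervalIntegrable V volume a b)
    (h : IsIntegralSolution B V W C a (Icc a b)) :
    IntervalIntegrable (fun t ↦ B (V t) (W t)) volume a b := by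
  set S := {x ∈ Icc a b | IntervalIntegrable (fun t ↦ B (V t) (W t)) volume a x}
  have haS : a ∈ S := ⟨left_mem_Icc.2 hab, .refl⟩
  have hbdd : BddAbove S := ⟨b, fun x hx ↦ hx.1.2⟩
  have ha_sup : a ≤ sSup S := le_csSup hbdd haS
  have hsup_b : sSup S ≤ b := csSup_le ⟨a, haS⟩ fun x hx ↦ hx.1.2
  have hsup : IntervalIntegrable (fun t ↦ B (V t) (W t)) volume a (sSup S) := by
    rcases ha_sup.eq_or_lt with heq | hlt
    · rw [← heq]
    refine intervalIntegrable_of_forall_lt hlt (hV.of_mem_Icc haS.1 ⟨ha_sup, hsup_b⟩)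
      (h.mono (Icc_subset_Icc_right hsup_b)) fun x hx ↦ ?_
    obtain ⟨y, hyS, hxy⟩ := exists_lt_of_lt_csSup ⟨a, haS⟩ hx.2
    exact hyS.2.of_mem_Icc (left_mem_Icc.2 hyS.1.1) ⟨hx.1, hxy.le⟩
  -- past `sSup S` the integral in the equation is the junk value `0`, so `W = C` there
  have hC : EqOn (fun t ↦ B (V t) C) (fun t ↦ B (V t) (W t)) (uIoc (sSup S) b) := fun x hx ↦ by
    rw [uIoc_of_le hsup_b] at hx
    have hxS : x ∉ S := fun hxS ↦ (le_csSup hbdd hxS).not_gt hx.1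
    have hxab : x ∈ Icc a b := ⟨ha_sup.trans hx.1.le, hx.2⟩
    dsimp only
    rw [h x hxab, integral_undef fun hx' ↦ hxS ⟨hxab, hx'⟩, add_zero]
  have hV_sup := hV.of_mem_Icc ⟨ha_sup, hsup_b⟩ (right_mem_Icc.2 hab)
  exact hsup.trans (IntervalIntegrable.congr hC
    ⟨(B.flip C).integrable_comp hV_sup.1, (B.flip C).integrable_comp hV_sup.2⟩)

theorem comp_sub_left (h : IsIntegralSolution B V W C c (Icc a c)) :
    IsIntegralSolution B (fun t ↦ -V (c - t)) (fun t ↦ W (c - t)) C 0 (Icc 0 (c - a)) :=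
  fun t ht ↦ by
    dsimp only
    rw [h (c - t) ⟨by linarith [ht.2], by linarith [ht.1]⟩]
    simp only [map_neg, _root_.neg_apply, intervalIntegral.integral_neg,
      integral_comp_sub_left (fun s ↦ B (V s) (W s)) c, sub_zero, integral_symm (c - t) c]

theorem intervalIntegrable (h : IsIntegralSolution B V W C c (Icc a b)) (hc : c ∈ Icc a b)
    (hV : IntervalIntegrable V volume a b) :
    IntervalIntegrable (fun t ↦ B (V t) (W t)) volume a b := by
  have ha : a ∈ Icc a b := left_mem_Icc.2 (hc.1.trans hc.2)
  have hb : b ∈ Icc a b := right_mem_Icc.2 (hc.1.trans hc.2)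
  have hright := (h.mono (Icc_subset_Icc_left hc.1)).intervalIntegrable_of_left hc.2
    (hV.of_mem_Icc hc hb)
  have hVr : IntervalIntegrable (fun t ↦ -V (c - t)) volume 0 (c - a) := by
    simpa [Pi.neg_def] using ((hV.of_mem_Icc ha hc).comp_sub_left c).neg.symm
  have hleft := (h.mono (Icc_subset_Icc_right hc.2)).comp_sub_left.intervalIntegrable_of_left
    (sub_nonneg.2 hc.1) hVr
  have hleft' : IntervalIntegrable (fun t ↦ B (V t) (W t)) volume a c := by
    simpa [Pi.neg_def] using (hleft.comp_sub_left c).neg.symm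
  exact hleft'.trans hright

theorem absolutelyContinuousOnInterval (h : IsIntegralSolution B V W C c (Icc a b))
    (hc : c ∈ Icc a b) (hV : IntervalIntegrable V volume a b) :
    AbsolutelyContinuousOnInterval W a b :=
  h.absolutelyContinuousOnInterval_of_intervalIntegrable hc (h.intervalIntegrable hc hV)

theorem ae_hasDerivAt [CompleteSpace F] (h : IsIntegralSolution B V W C c (Icc a b))
    (hc : c ∈ Icc a b) (hV : IntervalIntegrable V volume a b) :
    ∀ᵐ x, x ∈ Icc a b → HasDerivAt W (B (V x) (W x)) x := by
  filter_upwards [(h.intervalIntegrable hc hV).ae_hasDerivAt_integral, Ioo_ae_eq_Icc.mem_iff]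
    with x hderiv hIoo hx
  refine ((hderiv (Icc_subset_uIcc hx) c (Icc_subset_uIcc hc)).const_add C).congr_of_eventuallyEq
    (eventually_of_mem (Ioo_mem_nhds (hIoo.2 hx).1 (hIoo.2 hx).2) fun y hy ↦ ?_)
  exact h y (Ioo_subset_Icc_self hy)

end IsIntegralSolution

end IntegralEquation

/- `Matrix.normedAddCommGroup` is only a local instance, and its topology is not reducibly the
product topology that instance search finds first; make the norm topology the one found. -/
noncomputable local instance {n : Type*} [Fintype n] : TopologicalSpace (Matrix n n ℝ) :=
  Matrix.normedAddCommGroup.toUniformSpace.toTopologicalSpace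

namespace Matrix

variable {n : Type*} [Fintype n]

noncomputable def mulCLM : Matrix n n ℝ →L[ℝ] Matrix n n ℝ →L[ℝ] Matrix n n ℝ :=
  LinearMap.toContinuousLinearMap <|
    (LinearMap.toContinuousLinearMap : _ ≃ₗ[ℝ] (Matrix n n ℝ →L[ℝ] Matrix n n ℝ)).toLinearMap ∘ₗ
      LinearMap.mul ℝ (Matrix n n ℝ)

@[simp] theorem mulCLM_apply (A M : Matrix n n ℝ) : mulCLM A M = A * M := rfl

noncomputable def transposeCLM : Matrix n n ℝ →L[ℝ] Matrix n n ℝ :=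
  LinearMap.toContinuousLinearMap (transposeLinearEquiv n n ℝ ℝ).toLinearMap

@[simp] theorem transposeCLM_apply (A : Matrix n n ℝ) : transposeCLM A = Aᵀ := rfl

noncomputable def traceCLM : Matrix n n ℝ →L[ℝ] ℝ :=
  LinearMap.toContinuousLinearMap (traceLinearMap n ℝ ℝ)

@[simp] theorem traceCLM_apply (A : Matrix n n ℝ) : traceCLM A = A.trace := rfl

theorem adjugate_fin_two_add {R : Type*} [CommRing R] (A B : Matrix (Fin 2) (Fin 2) R) :
    adjugate (A + B) = adjugate A + adjugate B := by
  simp only [adjugate_fin_two]; ext i j; fin_cases i <;> fin_cases j <;> simp <;> ring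

noncomputable def adjugateCLM : Matrix (Fin 2) (Fin 2) ℝ →L[ℝ] Matrix (Fin 2) (Fin 2) ℝ :=
  LinearMap.toContinuousLinearMap
    { toFun := adjugate
      map_add' := adjugate_fin_two_add
      map_smul' := fun c A ↦ by simp [adjugate_smul] }

@[simp] theorem adjugateCLM_apply (A : Matrix (Fin 2) (Fin 2) ℝ) : adjugateCLM A = adjugate A :=
  rfl

theorem adjugate_fin_two_eq_neg {R : Type*} [CommRing R] {A : Matrix (Fin 2) (Fin 2) R}
    (hA : A.trace = 0) : adjugate A = -A := by
  rw [trace_fin_two] at hA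
  ext i j; fin_cases i <;> fin_cases j <;> simp [adjugate_fin_two] <;> linear_combination hA

theorem trace_mul_adjugate {R : Type*} [CommRing R] [DecidableEq n] (A : Matrix n n R) :
    (A * adjugate A).trace = Fintype.card n * A.det := by
  simp [mul_adjugate, trace_smul, mul_comm]

theorem trace_gram_mul_adjugate {R : Type*} [CommRing R] [DecidableEq n] (P Q : Matrix n n R) :
    ((P * adjugate Q)ᵀ * (P * adjugate Q)).trace = (Pᵀ * P * adjugate (Qᵀ * Q)).trace := by
  rw [adjugate_mul_distrib, ← adjugate_transpose, transpose_mul, Matrix.mul_assoc,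
    trace_mul_comm, Matrix.mul_assoc, Matrix.mul_assoc, Matrix.mul_assoc]

theorem trace_mul_adjugate_intervalIntegral {H : ℝ → Matrix (Fin 2) (Fin 2) ℝ} {a b : ℝ}
    (hH : IntervalIntegrable H volume a b) :
    ((∫ x in a..b, H x) * adjugate (∫ y in a..b, H y)).trace =
      ∫ x in a..b, ∫ y in a..b, (H x * adjugate (H y)).trace := by
  have hadjH : IntervalIntegrable (fun y ↦ adjugate (H y)) volume a b :=
    ⟨adjugateCLM.integrable_comp hH.1, adjugateCLM.integrable_comp hH.2⟩
  rw [← adjugateCLM_apply, ← adjugateCLM.intervalIntegral_comp_comm hH]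
  simp only [adjugateCLM_apply]
  calc ((∫ x in a..b, H x) * ∫ y in a..b, adjugate (H y)).trace
      = ∫ x in a..b, (H x * ∫ y in a..b, adjugate (H y)).trace := by
        simpa using (ContinuousLinearMap.intervalIntegral_comp_comm
          (traceCLM.comp (mulCLM.flip (∫ y in a..b, adjugate (H y)))) hH).symm
    _ = ∫ x in a..b, ∫ y in a..b, (H x * adjugate (H y)).trace :=
        integral_congr fun x _ ↦ by
          simpa using ((traceCLM.comp (mulCLM (H x))).intervalIntegral_comp_comm hadjH).symm

end Matrix

namespace IsIntegralSolution

variable {V N W₁ W₂ : ℝ → Matrix (Fin 2) (Fin 2) ℝ} {C₁ C₂ : Matrix (Fin 2) (Fin 2) ℝ}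
  {a b c₁ c₂ : ℝ}

theorem adjugate_mul_eq (h₁ : IsIntegralSolution mulCLM V W₁ C₁ c₁ (Icc a b))
    (hV : IntervalIntegrable V volume a b) (htr : ∀ x ∈ Icc a b, (V x).trace = 0)
    (hc₁ : c₁ ∈ Icc a b) (h₂ : IsIntegralSolution mulCLM V W₂ C₂ c₂ (Icc a b))
    (hc₂ : c₂ ∈ Icc a b) :
    ∀ x ∈ Icc a b, ∀ y ∈ Icc a b, adjugate (W₁ x) * W₂ x = adjugate (W₁ y) * W₂ y := by
  have hab : a ≤ b := hc₁.1.trans hc₁.2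
  let B := mulCLM.comp adjugateCLM
  have hderiv : ∀ᵐ x, x ∈ uIcc a b → HasDerivAt (fun x ↦ B (W₁ x) (W₂ x)) 0 x := by
    filter_upwards [h₁.ae_hasDerivAt hc₁ hV, h₂.ae_hasDerivAt hc₂ hV] with x hx₁ hx₂ hx
    rw [uIcc_of_le hab] at hx
    have hzero : B (W₁ x) (mulCLM (V x) (W₂ x)) + B (mulCLM (V x) (W₁ x)) (W₂ x) = 0 := by
      simp [B, adjugate_mul_distrib, adjugate_fin_two_eq_neg (htr x hx), Matrix.mul_assoc]
    have hd := B.hasDerivAt_of_bilinear (fun _ ↦ hx₁ hx) (fun _ ↦ hx₂ hx)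
    rwa [hzero] at hd
  obtain ⟨C, hC⟩ := ((h₁.absolutelyContinuousOnInterval hc₁ hV).clm_apply₂ B
    (h₂.absolutelyContinuousOnInterval hc₂ hV)).const_of_ae_hasDerivAt_zero hderiv
  intro x hx y hy
  exact (hC x (Icc_subset_uIcc hx)).trans (hC y (Icc_subset_uIcc hy)).symm

theorem det_eq_one (hN : IsIntegralSolution mulCLM V N 1 c₁ (Icc a b))
    (hV : IntervalIntegrable V volume a b) (htr : ∀ x ∈ Icc a b, (V x).trace = 0)
    (hc₁ : c₁ ∈ Icc a b) : ∀ x ∈ Icc a b, (N x).det = 1 := by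
  intro x hx
  have h := hN.adjugate_mul_eq hV htr hc₁ hN hc₁ x hx c₁ hc₁
  rw [adjugate_mul, adjugate_mul, show N c₁ = 1 by simpa using hN c₁ hc₁, det_one,
    one_smul] at h
  simpa using congrFun (congrFun h 0) 0

theorem eq_mul_adjugate (hN : IsIntegralSolution mulCLM V N 1 c₁ (Icc a b))
    (hV : IntervalIntegrable V volume a b) (htr : ∀ x ∈ Icc a b, (V x).trace = 0)
    (hc₁ : c₁ ∈ Icc a b) (hW : IsIntegralSolution mulCLM V W₂ 1 c₂ (Icc a b))
    (hc₂ : c₂ ∈ Icc a b) : ∀ x ∈ Icc a b, W₂ x = N x * adjugate (N c₂) := by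
  intro x hx
  have h := hN.adjugate_mul_eq hV htr hc₁ hW hc₂ x hx c₂ hc₂
  rw [show W₂ c₂ = 1 by simpa using hW c₂ hc₂, Matrix.mul_one] at h
  calc W₂ x = (N x).det • W₂ x := by rw [hN.det_eq_one hV htr hc₁ x hx, one_smul]
    _ = N x * (adjugate (N x) * W₂ x) := by
      rw [← Matrix.mul_assoc, mul_adjugate, smul_mul, Matrix.one_mul]
    _ = N x * adjugate (N c₂) := by rw [h]

end IsIntegralSolution

theorem stmt_9_general (V N : ℝ → Matrix (Fin 2) (Fin 2) ℝ)
    (U : ℝ → ℝ → Matrix (Fin 2) (Fin 2) ℝ)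
    (hV : @IntegrableOn ℝ (Matrix (Fin 2) (Fin 2) ℝ) _
      Matrix.normedAddCommGroup.toUniformSpace.toTopologicalSpace _ V (Set.Icc (0 : ℝ) 1) volume)
    (hVtr : ∀ x ∈ Set.Icc (0 : ℝ) 1, (V x).trace = 0)
    (hN : ∀ x ∈ Set.Icc (0 : ℝ) 1, N x = 1 + ∫ s in (0 : ℝ)..x, V s * N s)
    (hU : ∀ y ∈ Set.Icc (0 : ℝ) 1, ∀ x ∈ Set.Icc (0 : ℝ) 1,
      U x y = 1 + ∫ s in y..x, V s * U s y) :
    (∫ ξ in (0 : ℝ)..1, (N ξ)ᵀ * N ξ).det =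
      (1 / 2) * ∫ x in (0 : ℝ)..1, ∫ y in (0 : ℝ)..1, ((U x y)ᵀ * U x y).trace := by
  have h0 : (0 : ℝ) ∈ Icc (0 : ℝ) 1 := left_mem_Icc.2 zero_le_one
  have hV' : IntervalIntegrable V volume 0 1 :=
    (intervalIntegrable_iff_integrableOn_Icc_of_le zero_le_one).2 hV
  have hNsol : IsIntegralSolution mulCLM V N 1 0 (Icc 0 1) := hN
  have hUN : ∀ x ∈ Icc (0 : ℝ) 1, ∀ y ∈ Icc (0 : ℝ) 1, U x y = N x * adjugate (N y) :=
    fun x hx y hy ↦ hNsol.eq_mul_adjugate hV' hVtr h0 (hU y hy) hy x hx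
  have hNAC := hNsol.absolutelyContinuousOnInterval h0 hV'
  have hH : IntervalIntegrable (fun ξ ↦ (N ξ)ᵀ * N ξ) volume 0 1 :=
    (hNAC.clm_apply₂ (mulCLM.comp transposeCLM) hNAC).continuousOn.intervalIntegrable
  have hgram : ∫ x in (0 : ℝ)..1, ∫ y in (0 : ℝ)..1, ((U x y)ᵀ * U x y).trace =
      ∫ x in (0 : ℝ)..1, ∫ y in (0 : ℝ)..1, ((N x)ᵀ * N x * adjugate ((N y)ᵀ * N y)).trace := by
    refine integral_congr fun x hx ↦ integral_congr fun y hy ↦ ?_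
    rw [uIcc_of_le zero_le_one] at hx hy
    rw [hUN x hx y hy, trace_gram_mul_adjugate]
  have h2det := trace_mul_adjugate (∫ ξ in (0 : ℝ)..1, (N ξ)ᵀ * N ξ)
  rw [trace_mul_adjugate_intervalIntegral hH, Fintype.card_fin] at h2det
  rw [hgram, h2det]
  ring

/-- Let `V : [0,1] → M₂(ℝ)` be integrable, symmetric, trace-zero, let `N` solve
`N' = VN`, `N(0) = I` (expressed via the integral equation), and `H = NᵀN`.
With `U₊(x,y)` the solution of `∂ₓU₊ = V U₊`, `U₊(y,y) = I`, one has
`det(∫₀¹ H) = (1/2)∫₀¹∫₀¹ ‖U₊(x,y)‖²_HS dx dy`, `‖A‖²_HS = tr(AᵀA)`. -/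
theorem stmt_9 (V N : ℝ → Matrix (Fin 2) (Fin 2) ℝ)
    (U : ℝ → ℝ → Matrix (Fin 2) (Fin 2) ℝ)
    (hV : @IntegrableOn ℝ (Matrix (Fin 2) (Fin 2) ℝ) _
      Matrix.normedAddCommGroup.toUniformSpace.toTopologicalSpace _ V (Set.Icc (0 : ℝ) 1) volume)
    (hVsymm : ∀ x ∈ Set.Icc (0 : ℝ) 1, (V x)ᵀ = V x)
    (hVtr : ∀ x ∈ Set.Icc (0 : ℝ) 1, (V x).trace = 0)
    (hN : ∀ x ∈ Set.Icc (0 : ℝ) 1, N x = 1 + ∫ s in (0 : ℝ)..x, V s * N s)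
    (hU : ∀ y ∈ Set.Icc (0 : ℝ) 1, ∀ x ∈ Set.Icc (0 : ℝ) 1,
      U x y = 1 + ∫ s in y..x, V s * U s y) :
    (∫ ξ in (0 : ℝ)..1, (N ξ)ᵀ * N ξ).det =
      (1 / 2) * ∫ x in (0 : ℝ)..1, ∫ y in (0 : ℝ)..1, ((U x y)ᵀ * U x y).trace :=
  stmt_9_general V N U hV hVtr hN hU
end

section
/- Let V: [0,1] → M₂(ℝ) be integrable with V = Vᵀ and tr V = 0, and let N solve N' = VN with N(0) = I. Set H = NᵀN. Let U₊ and U₋ be the solutions of ∂ₓU± = ±V(x)U± with U±(y,y) = I. Then det(∫₀¹ H(ξ) dξ) - 1 = (1/2) ∫₀¹∫₀¹ ‖(U₊(x,y) - U₋(x,y))e₁‖² dx dy, where e₁ = (1,0)ᵀ. -/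
open MeasureTheory Matrix intervalIntegral

attribute [local instance] Matrix.normedAddCommGroup Matrix.normedSpace

/-!
The integral equations constrain a solution only where their integrand is integrable (elsewhere
Lean's integral is `0`), so the first step is regularity: if `M x = M₀ + ∫_y^x A M` with `A`
integrable, then `A M` is integrable. On the largest interval where it is, `M` stays bounded, since
on a final piece with `∫ ‖A‖ ≤ 1/2` it is at most twice its initial value; so that interval is all
of `[0, 1]`.

Solutions are then absolutely continuous and the product rule gives three conservation laws:
`adj N · N` is constant because `V + adj V = tr V • 1 = 0`, and so are `adj N(x) · U₊(x, y)` and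
`N(x)ᵀ · U₋(x, y)` because `Vᵀ = V`. Hence `det N = 1`, `U₊(x, y) = N(x) adj N(y)` and
`U₋(x, y) = (adj N(x))ᵀ N(y)ᵀ`, and a 2×2 computation turns the integrand into
`tr (H(x) adj H(y)) - 2`. This is bilinear in `(H(x), H(y))`, so the double integral equals
`tr (J adj J) - 2 = 2 det J - 2` with `J = ∫₀¹ H`.
-/

open Set Filter Topology

lemma ContinuousLinearMap.intervalIntegrable_comp {E F : Type*} [NormedAddCommGroup E]
    [NormedSpace ℝ E] [NormedAddCommGroup F] [NormedSpace ℝ F] (L : E →L[ℝ] F) {f : ℝ → E}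
    {a b : ℝ} (hf : IntervalIntegrable f volume a b) :
    IntervalIntegrable (fun x => L (f x)) volume a b :=
  ⟨L.integrable_comp hf.1, L.integrable_comp hf.2⟩

section Primitive

variable {E E' : Type*} [NormedAddCommGroup E] [NormedSpace ℝ E]
  [NormedAddCommGroup E'] [NormedSpace ℝ E']

def IsPrimitiveOn (F f : ℝ → E) (a b : ℝ) : Prop :=
  IntervalIntegrable f volume a b ∧ ∀ x ∈ uIcc a b, F x = F a + ∫ t in a..x, f t

variable {F f : ℝ → E} {a b c d e : ℝ}

lemma IntervalIntegrable.isPrimitiveOn {C : E} (hf : IntervalIntegrable f volume a b)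
    (hc : c ∈ uIcc a b) (hd : d ∈ uIcc a b) (he : e ∈ uIcc a b)
    (hF : ∀ x ∈ uIcc c d, F x = C + ∫ t in e..x, f t) : IsPrimitiveOn F f c d := by
  have hsub := uIcc_subset_uIcc hc hd
  refine ⟨hf.mono_set hsub, fun x hx => ?_⟩
  rw [hF x hx, hF c left_mem_uIcc, add_assoc, integral_add_adjacent_intervals
    (hf.mono_set (uIcc_subset_uIcc he hc)) (hf.mono_set (uIcc_subset_uIcc hc (hsub hx)))]

lemma IsPrimitiveOn.mono (h : IsPrimitiveOn F f a b) (hc : c ∈ uIcc a b) (hd : d ∈ uIcc a b) :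
    IsPrimitiveOn F f c d :=
  h.1.isPrimitiveOn hc hd left_mem_uIcc fun x hx => h.2 x (uIcc_subset_uIcc hc hd hx)

lemma IsPrimitiveOn.continuousOn (h : IsPrimitiveOn F f a b) : ContinuousOn F (uIcc a b) :=
  (continuousOn_const.add
    (continuousOn_primitive_interval ((intervalIntegrable_iff' (by simp)).1 h.1))).congr h.2

lemma IsPrimitiveOn.map [CompleteSpace E] [CompleteSpace E'] (h : IsPrimitiveOn F f a b)
    (L : E →L[ℝ] E') : IsPrimitiveOn (fun x => L (F x)) (fun x => L (f x)) a b :=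
  ⟨L.intervalIntegrable_comp h.1, fun x hx => by
    simp only
    rw [h.2 x hx, map_add,
      L.intervalIntegral_comp_comm (h.1.mono_set (uIcc_subset_uIcc left_mem_uIcc hx))]⟩

lemma IsPrimitiveOn.mul_sub_mul {F G f g : ℝ → ℝ} (hF : IsPrimitiveOn F f a b)
    (hG : IsPrimitiveOn G g a b) :
    F b * G b - F a * G a = ∫ x in a..b, f x * G x + F x * g x := by
  have hac (F₀ : ℝ) {φ : ℝ → ℝ} (hφ : IntervalIntegrable φ volume a b) :
      AbsolutelyContinuousOnInterval (fun x => F₀ + ∫ t in a..x, φ t) a b :=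
    (LipschitzWith.const F₀).lipschitzOnWith.absolutelyContinuousOnInterval.fun_add
      (hφ.absolutelyContinuousOnInterval_intervalIntegral left_mem_uIcc)
  have hparts := (hac (F a) hF.1).integral_deriv_mul_eq_sub (hac (G a) hG.1)
  simp only [integral_same, add_zero] at hparts
  rw [hF.2 b right_mem_uIcc, hG.2 b right_mem_uIcc, ← hparts]
  refine integral_congr_ae ?_
  filter_upwards [hF.1.ae_hasDerivAt_integral, hG.1.ae_hasDerivAt_integral] with x hf hg hx
  have hx' := uIoc_subset_uIcc hx
  rw [((hf hx' a left_mem_uIcc).const_add (F a)).deriv,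
    ((hg hx' a left_mem_uIcc).const_add (G a)).deriv, hF.2 x hx', hG.2 x hx']

end Primitive

section MatrixPrimitive

variable {l m p : Type*} [Fintype l] [Fintype m] [Fintype p] {a b : ℝ}

lemma IsPrimitiveOn.entry {F f : ℝ → Matrix m p ℝ} (h : IsPrimitiveOn F f a b) (i : m) (j : p) :
    IsPrimitiveOn (fun x => F x i j) (fun x => f x i j) a b :=
  h.map (entryLinearMap ℝ ℝ i j).toContinuousLinearMap

lemma IsPrimitiveOn.mul_eq_mul {F f : ℝ → Matrix l m ℝ} {G g : ℝ → Matrix m p ℝ}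
    (hF : IsPrimitiveOn F f a b) (hG : IsPrimitiveOn G g a b)
    (h : ∀ x ∈ uIcc a b, f x * G x + F x * g x = 0) : F b * G b = F a * G a := by
  ext i j
  rw [← sub_eq_zero]
  calc (F b * G b) i j - (F a * G a) i j
      = ∑ k, ∫ x in a..b, f x i k * G x k j + F x i k * g x k j := by
        simp only [mul_apply, ← Finset.sum_sub_distrib]
        exact Finset.sum_congr rfl fun k _ => (hF.entry i k).mul_sub_mul (hG.entry k j)
    _ = ∫ x in a..b, (f x * G x + F x * g x) i j := by
        simp only [Matrix.add_apply, mul_apply, ← Finset.sum_add_distrib]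
        refine (intervalIntegral.integral_finsetSum fun k _ => ?_).symm
        exact ((hF.entry i k).1.mul_continuousOn (hG.entry k j).continuousOn).add
          ((hG.entry k j).1.continuousOn_mul (hF.entry i k).continuousOn)
    _ = 0 := by
        rw [integral_congr fun x hx => congrFun (congrFun (h x hx) i) j]
        simp

end MatrixPrimitive

section Regularity

variable {E : Type*} [NormedAddCommGroup E] [NormedSpace ℝ E]
  {A : ℝ → E →L[ℝ] E} {M : ℝ → E} {M₀ : E} {a b c : ℝ}

lemma IsPrimitiveOn.norm_le_two_mul (hab : a ≤ b) (hA : IntervalIntegrable A volume a b)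
    (hM : IsPrimitiveOn M (fun s => A s (M s)) a b) (hsmall : ∫ s in a..b, ‖A s‖ ≤ 1 / 2) :
    ∀ x ∈ Icc a b, ‖M x‖ ≤ 2 * ‖M a‖ := by
  have hcont : ContinuousOn (fun x => ‖M x‖) (Icc a b) := by
    simpa only [uIcc_of_le hab] using hM.continuousOn.norm
  obtain ⟨z, hz, hmax⟩ := isCompact_Icc.exists_isMaxOn (nonempty_Icc.2 hab) hcont
  have hzM : ‖M z‖ ≤ ‖M a‖ + ‖M z‖ / 2 :=
    calc ‖M z‖ ≤ ‖M a‖ + ∫ s in a..z, ‖A s (M s)‖ := by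
          rw [hM.2 z (Icc_subset_uIcc hz)]
          exact (norm_add_le _ _).trans
            (add_le_add_right (intervalIntegral.norm_integral_le_integral_norm hz.1) _)
      _ ≤ ‖M a‖ + ∫ s in a..b, ‖A s (M s)‖ := by
          gcongr
          exact integral_mono_interval le_rfl hz.1 hz.2
            (Eventually.of_forall fun s => norm_nonneg _) hM.1.norm
      _ ≤ ‖M a‖ + ∫ s in a..b, ‖A s‖ * ‖M z‖ := by
          gcongr
          refine integral_mono_on hab hM.1.norm (hA.norm.mul_const _) fun s hs => ?_
          exact (A s).le_opNorm_of_le (hmax hs)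
      _ = ‖M a‖ + (∫ s in a..b, ‖A s‖) * ‖M z‖ := by rw [intervalIntegral.integral_mul_const]
      _ ≤ ‖M a‖ + ‖M z‖ / 2 := by nlinarith [norm_nonneg (M z)]
  intro x hx
  linarith [show ‖M x‖ ≤ ‖M z‖ from hmax hx]

lemma exists_bound_of_forall_isPrimitiveOn (hac : a ≤ c) (hA : IntervalIntegrable A volume a c)
    (hM : ∀ t ∈ Ico a c, IsPrimitiveOn M (fun s => A s (M s)) a t) :
    ∃ C, 0 ≤ C ∧ ∀ x ∈ Ico a c, ‖M x‖ ≤ C := by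
  rcases hac.eq_or_lt with rfl | hac
  · exact ⟨0, le_rfl, by simp⟩
  -- Compactness bounds `M` on `[a, t]`; past `t` the tail of `∫ ‖A‖` is below `1/2`.
  obtain ⟨t, htail, ht⟩ : ∃ t, ∫ s in t..c, ‖A s‖ < 1 / 2 ∧ t ∈ Ioo a c := by
    have h := (continuousOn_primitive_interval_left
      ((intervalIntegrable_iff' (by simp)).1 hA.norm) c right_mem_uIcc).tendsto
    rw [integral_same] at h
    have hle : 𝓝[<] c ≤ 𝓝[uIcc a c] c :=
      nhdsWithin_le_of_mem (by rw [uIcc_of_le hac.le]; exact Icc_mem_nhdsLT hac)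
    exact (((h.mono_left hle).eventually (gt_mem_nhds (by norm_num))).and
      (Ioo_mem_nhdsLT hac)).exists
  have hMt := hM t ⟨ht.1.le, ht.2⟩
  obtain ⟨C₀, hC₀⟩ := isCompact_Icc.exists_bound_of_continuousOn
    (by simpa only [uIcc_of_le ht.1.le] using hMt.continuousOn)
  refine ⟨max C₀ (2 * ‖M t‖), le_max_of_le_right (by positivity), fun x hx => ?_⟩
  rcases le_total x t with hxt | hxt
  · exact (hC₀ x ⟨hx.1, hxt⟩).trans (le_max_left _ _)
  have hsub : uIcc t x ⊆ uIcc a c := uIcc_subset_uIcc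
    (Icc_subset_uIcc ⟨ht.1.le, ht.2.le⟩) (Icc_subset_uIcc ⟨hx.1, hx.2.le⟩)
  refine le_max_of_le_right (IsPrimitiveOn.norm_le_two_mul hxt (hA.mono_set hsub)
    ((hM x hx).mono (Icc_subset_uIcc ⟨ht.1.le, hxt⟩) right_mem_uIcc) ?_ x ⟨hxt, le_rfl⟩)
  exact (integral_mono_interval le_rfl hxt hx.2.le (Eventually.of_forall fun s => norm_nonneg _)
    (hA.norm.mono_set (uIcc_subset_uIcc (Icc_subset_uIcc ⟨ht.1.le, ht.2.le⟩) right_mem_uIcc))).trans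
    htail.le

lemma intervalIntegrable_apply_of_forall_isPrimitiveOn (hac : a ≤ c)
    (hA : IntervalIntegrable A volume a c)
    (hM : ∀ t ∈ Ico a c, IsPrimitiveOn M (fun s => A s (M s)) a t) :
    IntervalIntegrable (fun s => A s (M s)) volume a c := by
  rcases hac.eq_or_lt with rfl | hac
  · exact IntervalIntegrable.refl
  obtain ⟨C, hC0, hC⟩ := exists_bound_of_forall_isPrimitiveOn hac.le hA hM
  obtain ⟨u, -, hu, hlim⟩ := exists_seq_strictMono_tendsto' hac
  have hAi : IntegrableOn (fun s => C * ‖A s‖) (Ioc a c) :=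
    (intervalIntegrable_iff_integrableOn_Ioc_of_le hac.le).1 (hA.norm.const_mul C)
  rw [intervalIntegrable_iff_integrableOn_Ioc_of_le hac.le]
  refine integrableOn_Ioc_of_intervalIntegral_norm_bounded_right (I := C * ∫ s in a..c, ‖A s‖)
    (fun n => (intervalIntegrable_iff_integrableOn_Ioc_of_le (hu n).1.le).1
      (hM (u n) ⟨(hu n).1.le, (hu n).2⟩).1) hlim (Eventually.of_forall fun n => ?_)
  have hsub : Ioc a (u n) ⊆ Ioc a c := Ioc_subset_Ioc_right (hu n).2.le
  calc ∫ x in Ioc a (u n), ‖A x (M x)‖ ≤ ∫ x in Ioc a (u n), C * ‖A x‖ := by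
        refine setIntegral_mono_on ?_ (hAi.mono_set hsub) measurableSet_Ioc fun x hx => ?_
        · exact ((intervalIntegrable_iff_integrableOn_Ioc_of_le (hu n).1.le).1
            (hM (u n) ⟨(hu n).1.le, (hu n).2⟩).1).norm
        · rw [mul_comm]
          exact (A x).le_opNorm_of_le (hC x ⟨hx.1.le, hx.2.trans_lt (hu n).2⟩)
    _ ≤ ∫ x in Ioc a c, C * ‖A x‖ :=
        setIntegral_mono_set hAi (Eventually.of_forall fun x => by positivity) hsub.eventuallyLE
    _ = C * ∫ s in a..c, ‖A s‖ := by rw [integral_of_le hac.le, MeasureTheory.integral_const_mul]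

lemma intervalIntegrable_apply_of_eq_add_integral_left (hab : a ≤ b)
    (hA : IntervalIntegrable A volume a b)
    (hM : ∀ x ∈ Icc a b, M x = M₀ + ∫ s in a..x, A s (M s)) :
    IntervalIntegrable (fun s => A s (M s)) volume a b := by
  set T := {t ∈ Icc a b | IntervalIntegrable (fun s => A s (M s)) volume a t}
  have haT : a ∈ T := ⟨left_mem_Icc.2 hab, IntervalIntegrable.refl⟩
  have hTb : BddAbove T := ⟨b, fun t ht => ht.1.2⟩
  set c := sSup T
  have hac : a ≤ c := le_csSup hTb haT
  have hcb : c ≤ b := csSup_le ⟨a, haT⟩ fun t ht => ht.1.2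
  have hab' : ∀ x ∈ Icc a c, x ∈ uIcc a b := fun x hx => Icc_subset_uIcc ⟨hx.1, hx.2.trans hcb⟩
  have hTc : ∀ t ∈ Ico a c, IsPrimitiveOn M (fun s => A s (M s)) a t := by
    intro t ht
    obtain ⟨t', ht'T, htt'⟩ := exists_lt_of_lt_csSup ⟨a, haT⟩ ht.2
    refine (ht'T.2.mono_set (uIcc_subset_uIcc left_mem_uIcc
      (Icc_subset_uIcc ⟨ht.1, htt'.le⟩))).isPrimitiveOn left_mem_uIcc right_mem_uIcc
      left_mem_uIcc fun x hx => hM x ?_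
    rw [uIcc_of_le ht.1] at hx
    exact ⟨hx.1, hx.2.trans (htt'.le.trans ht'T.1.2)⟩
  -- Past `c` the integral in `hM` is the junk value `0`, so `M = M₀` there.
  have hjunk : EqOn (fun s => A s (M s)) (fun s => A s M₀) (Ioc c b) := by
    intro x hx
    have hxT : x ∉ T := fun hxT => hx.1.not_ge (le_csSup hTb hxT)
    have hx' : x ∈ Icc a b := ⟨hac.trans hx.1.le, hx.2⟩
    simp only [hM x hx', integral_undef fun h => hxT ⟨hx', h⟩, add_zero]
  have hA₀ : IntervalIntegrable (fun s => A s M₀) volume c b :=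
    let L := ContinuousLinearMap.apply ℝ E M₀
    have hA' := hA.mono_set (uIcc_subset_uIcc (hab' c ⟨hac, le_rfl⟩) right_mem_uIcc)
    ⟨L.integrable_comp hA'.1, L.integrable_comp hA'.2⟩
  refine (intervalIntegrable_apply_of_forall_isPrimitiveOn hac
    (hA.mono_set (uIcc_subset_uIcc left_mem_uIcc (hab' c ⟨hac, le_rfl⟩))) hTc).trans ?_
  rw [intervalIntegrable_iff_integrableOn_Ioc_of_le hcb] at hA₀ ⊢
  exact hA₀.congr_fun hjunk.symm measurableSet_Ioc

lemma intervalIntegrable_apply_of_eq_add_integral_right (hab : a ≤ b)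
    (hA : IntervalIntegrable A volume a b)
    (hM : ∀ x ∈ Icc a b, M x = M₀ + ∫ s in b..x, A s (M s)) :
    IntervalIntegrable (fun s => A s (M s)) volume a b := by
  have hA' : IntervalIntegrable (fun s => -A (-s)) volume (-b) (-a) :=
    ((IntervalIntegrable.iff_comp_neg (by simp)).1 hA).neg.symm
  have hreflected := intervalIntegrable_apply_of_eq_add_integral_left (M := fun s => M (-s)) (M₀ := M₀)
    (neg_le_neg hab) hA' fun x hx => ?_
  · rw [IntervalIntegrable.iff_comp_neg (by simp)]
    convert hreflected.neg.symm using 1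
    ext s
    simp
  · rw [hM (-x) ⟨by linarith [hx.2], by linarith [hx.1]⟩]
    simp [intervalIntegral.integral_comp_neg (fun s => A s (M s)), ← integral_symm]

theorem isPrimitiveOn_of_forall_eq_add_integral {y : ℝ} (hy : y ∈ Icc a b)
    (hA : IntervalIntegrable A volume a b)
    (hM : ∀ x ∈ Icc a b, M x = M₀ + ∫ s in y..x, A s (M s)) :
    IsPrimitiveOn M (fun s => A s (M s)) a b := by
  have hab := hy.1.trans hy.2
  have hAy := hA.mono_set (uIcc_subset_uIcc left_mem_uIcc (Icc_subset_uIcc hy))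
  have hyb := hA.mono_set (uIcc_subset_uIcc (Icc_subset_uIcc hy) right_mem_uIcc)
  refine ((intervalIntegrable_apply_of_eq_add_integral_right hy.1 hAy fun x hx =>
      hM x (Icc_subset_Icc_right hy.2 hx)).trans
    (intervalIntegrable_apply_of_eq_add_integral_left hy.2 hyb fun x hx =>
      hM x (Icc_subset_Icc_left hy.1 hx))).isPrimitiveOn left_mem_uIcc right_mem_uIcc
    (Icc_subset_uIcc hy) fun x hx => hM x ?_
  rwa [uIcc_of_le hab] at hx

end Regularity

theorem LinearMap.isPrimitiveOn_of_forall_eq_add_integral {E : Type*} [NormedAddCommGroup E]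
    [NormedSpace ℝ E] [FiniteDimensional ℝ E] (B : E →ₗ[ℝ] E →ₗ[ℝ] E) {V M : ℝ → E} {M₀ : E}
    {a b y : ℝ} (hy : y ∈ Icc a b) (hV : IntegrableOn V (Icc a b))
    (hM : ∀ x ∈ Icc a b, M x = M₀ + ∫ s in y..x, B (V s) (M s)) :
    IsPrimitiveOn M (fun s => B (V s) (M s)) a b :=
  _root_.isPrimitiveOn_of_forall_eq_add_integral (A := fun s => B.toContinuousBilinearMap (V s)) hy
    (B.toContinuousBilinearMap.intervalIntegrable_comp
      ((intervalIntegrable_iff_integrableOn_Icc_of_le (hy.1.trans hy.2)).2 hV)) hM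

lemma LinearMap.integral_integral_sub_const {E : Type*} [NormedAddCommGroup E] [NormedSpace ℝ E]
    [FiniteDimensional ℝ E] (B : E →ₗ[ℝ] E →ₗ[ℝ] ℝ) {f : ℝ → E} {a b : ℝ}
    (hf : IntervalIntegrable f volume a b) (C : ℝ) :
    ∫ x in a..b, ∫ y in a..b, (B (f x) (f y) - C) =
      B (∫ x in a..b, f x) (∫ x in a..b, f x) - (b - a) ^ 2 * C := by
  set B' := B.toContinuousBilinearMap
  have hB : ∀ u v, B u v = B' u v := fun _ _ => rfl
  set J := ∫ x in a..b, f x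
  have hinner : ∀ x, ∫ y in a..b, (B' (f x) (f y) - C) = B'.flip J (f x) - (b - a) * C :=
    fun x => by
      rw [integral_sub ((B' (f x)).intervalIntegrable_comp hf) intervalIntegrable_const,
        (B' (f x)).intervalIntegral_comp_comm hf, intervalIntegral.integral_const, smul_eq_mul,
        ContinuousLinearMap.flip_apply]
  simp only [hB, hinner]
  rw [integral_sub ((B'.flip J).intervalIntegrable_comp hf) intervalIntegrable_const,
    (B'.flip J).intervalIntegral_comp_comm hf, intervalIntegral.integral_const, smul_eq_mul,
    ContinuousLinearMap.flip_apply]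
  ring

section Adjugate

variable {n R : Type*} [Fintype n] [DecidableEq n] [CommRing R]

lemma Matrix.trace_mul_adjugate_s10 (A : Matrix n n R) :
    trace (A * adjugate A) = Fintype.card n * A.det := by
  simp [mul_adjugate, mul_comm]

lemma Matrix.det_eq_one_of_adjugate_mul_self_eq_one [Nonempty n] {A : Matrix n n R}
    (h : adjugate A * A = 1) : A.det = 1 := by
  obtain ⟨i⟩ := ‹Nonempty n›
  simpa using congrFun (congrFun ((adjugate_mul A).symm.trans h) i) i

lemma Matrix.add_adjugate_fin_two (A : Matrix (Fin 2) (Fin 2) R) :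
    A + adjugate A = trace A • 1 := by
  ext i j
  fin_cases i <;> fin_cases j <;> simp [adjugate_fin_two, trace_fin_two, add_comm]

variable (R) in
def Matrix.adjugateLinearMapFinTwo : Matrix (Fin 2) (Fin 2) R →ₗ[R] Matrix (Fin 2) (Fin 2) R where
  toFun := adjugate
  map_add' A B := by
    ext i j
    fin_cases i <;> fin_cases j <;> simp [adjugate_fin_two, add_comm]
  map_smul' c A := by
    ext i j
    fin_cases i <;> fin_cases j <;> simp [adjugate_fin_two]

variable (R) in
def Matrix.traceMulAdjugate : Matrix (Fin 2) (Fin 2) R →ₗ[R] Matrix (Fin 2) (Fin 2) R →ₗ[R] R :=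
  ((LinearMap.mul R _).compl₂ (adjugateLinearMapFinTwo R)).compr₂ (traceLinearMap (Fin 2) R R)

lemma Matrix.traceMulAdjugate_apply (P Q : Matrix (Fin 2) (Fin 2) R) :
    traceMulAdjugate R P Q = trace (P * adjugate Q) :=
  rfl

lemma Matrix.sq_add_sq_mulVec_eq_trace_sub_two (P Q : Matrix (Fin 2) (Fin 2) ℝ) (hP : P.det = 1)
    (hQ : Q.det = 1) :
    ((P * adjugate Q - (adjugate P)ᵀ * Qᵀ) *ᵥ ![1, 0]) 0 ^ 2 +
      ((P * adjugate Q - (adjugate P)ᵀ * Qᵀ) *ᵥ ![1, 0]) 1 ^ 2 =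
      trace (Pᵀ * P * adjugate (Qᵀ * Q)) - 2 := by
  rw [det_fin_two] at hP hQ
  simp only [mulVec, adjugate_fin_two, trace_fin_two, mul_apply, sub_apply, transpose_apply,
    Fin.sum_univ_two, dotProduct, of_apply, cons_val', cons_val_zero, cons_val_one, empty_val',
    cons_val_fin_one]
  linear_combination (-2 - 2 * (Q 0 0 * Q 1 1 - Q 0 1 * Q 1 0 - 1)) * hP - 2 * hQ

end Adjugate

section LinearSystem

variable {a b : ℝ}

lemma transpose_mul_eq_of_isPrimitiveOn {n : Type*} [Fintype n] {V N U : ℝ → Matrix n n ℝ}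
    (hV : ∀ x ∈ uIcc a b, (V x)ᵀ = V x) (hN : IsPrimitiveOn N (fun s => V s * N s) a b)
    (hU : IsPrimitiveOn U (fun s => -(V s * U s)) a b) : (N b)ᵀ * U b = (N a)ᵀ * U a :=
  (hN.map (transposeLinearEquiv n n ℝ ℝ).toLinearMap.toContinuousLinearMap).mul_eq_mul hU
    fun x hx => by
      change (V x * N x)ᵀ * U x + (N x)ᵀ * -(V x * U x) = 0
      rw [transpose_mul, hV x hx, mul_neg, mul_assoc, add_neg_cancel]

variable {V N U : ℝ → Matrix (Fin 2) (Fin 2) ℝ}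

lemma adjugate_mul_eq_of_isPrimitiveOn (hV : ∀ x ∈ uIcc a b, trace (V x) = 0)
    (hN : IsPrimitiveOn N (fun s => V s * N s) a b)
    (hU : IsPrimitiveOn U (fun s => V s * U s) a b) :
    adjugate (N b) * U b = adjugate (N a) * U a :=
  (hN.map (adjugateLinearMapFinTwo ℝ).toContinuousLinearMap).mul_eq_mul hU fun x hx => by
    change adjugate (V x * N x) * U x + adjugate (N x) * (V x * U x) = 0
    rw [adjugate_mul_distrib, mul_assoc, ← mul_add, ← add_mul, add_comm, add_adjugate_fin_two,
      hV x hx, zero_smul, zero_mul, mul_zero]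

lemma adjugate_mul_self_eq_one_of_isPrimitiveOn (hV : ∀ x ∈ uIcc a b, trace (V x) = 0)
    (hN : IsPrimitiveOn N (fun s => V s * N s) a b) (hNa : N a = 1) :
    adjugate (N b) * N b = 1 := by
  rw [adjugate_mul_eq_of_isPrimitiveOn hV hN hN, hNa, adjugate_one, one_mul]

lemma eq_mul_adjugate_of_isPrimitiveOn (hV : ∀ x ∈ uIcc a b, trace (V x) = 0)
    (hN : IsPrimitiveOn N (fun s => V s * N s) a b)
    (hU : IsPrimitiveOn U (fun s => V s * U s) a b) (hUa : U a = 1)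
    (hNb : adjugate (N b) * N b = 1) : U b = N b * adjugate (N a) := by
  rw [← mul_one (adjugate (N a)), ← hUa, ← adjugate_mul_eq_of_isPrimitiveOn hV hN hU, ← mul_assoc,
    mul_eq_one_comm.1 hNb, one_mul]

lemma eq_adjugate_transpose_mul_of_isPrimitiveOn (hV : ∀ x ∈ uIcc a b, (V x)ᵀ = V x)
    (hN : IsPrimitiveOn N (fun s => V s * N s) a b)
    (hU : IsPrimitiveOn U (fun s => -(V s * U s)) a b) (hUa : U a = 1)
    (hNb : adjugate (N b) * N b = 1) : U b = (adjugate (N b))ᵀ * (N a)ᵀ := by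
  rw [← mul_one (N a)ᵀ, ← hUa, ← transpose_mul_eq_of_isPrimitiveOn hV hN hU, ← mul_assoc,
    ← transpose_mul, mul_eq_one_comm.1 hNb, transpose_one, one_mul]

lemma sq_add_sq_mulVec_sub_eq_traceMulAdjugate (hVtr : ∀ x ∈ uIcc a b, trace (V x) = 0)
    (hVsymm : ∀ x ∈ uIcc a b, (V x)ᵀ = V x) (hN : IsPrimitiveOn N (fun s => V s * N s) a b)
    (hNa : N a = 1) {Up Um : ℝ → Matrix (Fin 2) (Fin 2) ℝ} {x y : ℝ} (hx : x ∈ uIcc a b)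
    (hy : y ∈ uIcc a b) (hUp : IsPrimitiveOn Up (fun s => V s * Up s) y x)
    (hUm : IsPrimitiveOn Um (fun s => -(V s * Um s)) y x) (hUpy : Up y = 1) (hUmy : Um y = 1) :
    ((Up x - Um x) *ᵥ ![1, 0]) 0 ^ 2 + ((Up x - Um x) *ᵥ ![1, 0]) 1 ^ 2 =
      traceMulAdjugate ℝ ((N x)ᵀ * N x) ((N y)ᵀ * N y) - 2 := by
  have hNinv {z} (hz : z ∈ uIcc a b) : adjugate (N z) * N z = 1 :=
    adjugate_mul_self_eq_one_of_isPrimitiveOn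
      (fun s hs => hVtr s (uIcc_subset_uIcc left_mem_uIcc hz hs)) (hN.mono left_mem_uIcc hz) hNa
  have hsub := uIcc_subset_uIcc hy hx
  rw [eq_mul_adjugate_of_isPrimitiveOn (fun s hs => hVtr s (hsub hs)) (hN.mono hy hx) hUp hUpy
      (hNinv hx),
    eq_adjugate_transpose_mul_of_isPrimitiveOn (fun s hs => hVsymm s (hsub hs)) (hN.mono hy hx)
      hUm hUmy (hNinv hx),
    sq_add_sq_mulVec_eq_trace_sub_two _ _ (det_eq_one_of_adjugate_mul_self_eq_one (hNinv hx))
      (det_eq_one_of_adjugate_mul_self_eq_one (hNinv hy)), traceMulAdjugate_apply]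

end LinearSystem

/-- Let `V : [0,1] → M₂(ℝ)` be integrable, symmetric, trace-zero, let `N` solve
`N' = VN`, `N(0) = I`, `H = NᵀN`, and let `U₊, U₋` solve `∂ₓU± = ±V U±`,
`U±(y,y) = I` (all ODEs expressed via integral equations). Then
`det(∫₀¹ H) - 1 = (1/2)∫₀¹∫₀¹ ‖(U₊(x,y) - U₋(x,y))e₁‖² dx dy`, the Euclidean
norm squared written as the sum of squares of coordinates. -/
theorem stmt_10 (V N : ℝ → Matrix (Fin 2) (Fin 2) ℝ)
    (Up Um : ℝ → ℝ → Matrix (Fin 2) (Fin 2) ℝ)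
    (hV : @IntegrableOn _ _ _ _ SeminormedAddGroup.toContinuousENorm V (Set.Icc (0 : ℝ) 1) volume)
    (hVsymm : ∀ x ∈ Set.Icc (0 : ℝ) 1, (V x)ᵀ = V x)
    (hVtr : ∀ x ∈ Set.Icc (0 : ℝ) 1, (V x).trace = 0)
    (hN : ∀ x ∈ Set.Icc (0 : ℝ) 1, N x = 1 + ∫ s in (0 : ℝ)..x, V s * N s)
    (hUp : ∀ y ∈ Set.Icc (0 : ℝ) 1, ∀ x ∈ Set.Icc (0 : ℝ) 1,
      Up x y = 1 + ∫ s in y..x, V s * Up s y)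
    (hUm : ∀ y ∈ Set.Icc (0 : ℝ) 1, ∀ x ∈ Set.Icc (0 : ℝ) 1,
      Um x y = 1 + ∫ s in y..x, -(V s * Um s y)) :
    (∫ ξ in (0 : ℝ)..1, (N ξ)ᵀ * N ξ).det - 1 =
      (1 / 2) * ∫ x in (0 : ℝ)..1, ∫ y in (0 : ℝ)..1,
        (((Up x y - Um x y).mulVec ![1, 0] 0) ^ 2 +
         ((Up x y - Um x y).mulVec ![1, 0] 1) ^ 2) := by
  have hI : uIcc (0 : ℝ) 1 = Icc 0 1 := uIcc_of_le zero_le_one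
  have hNp : IsPrimitiveOn N (fun s => V s * N s) 0 1 :=
    (LinearMap.mul ℝ _).isPrimitiveOn_of_forall_eq_add_integral (left_mem_Icc.2 zero_le_one) hV hN
  have hUpp (y) (hy : y ∈ Icc (0 : ℝ) 1) :
      IsPrimitiveOn (fun x => Up x y) (fun s => V s * Up s y) 0 1 :=
    (LinearMap.mul ℝ _).isPrimitiveOn_of_forall_eq_add_integral hy hV (hUp y hy)
  have hUmp (y) (hy : y ∈ Icc (0 : ℝ) 1) :
      IsPrimitiveOn (fun x => Um x y) (fun s => -(V s * Um s y)) 0 1 :=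
    (-LinearMap.mul ℝ _).isPrimitiveOn_of_forall_eq_add_integral hy hV (hUm y hy)
  rw [← hI] at hVsymm hVtr hN hUp hUm hUpp hUmp
  rw [integral_congr fun x hx => integral_congr fun y hy =>
      sq_add_sq_mulVec_sub_eq_traceMulAdjugate hVtr hVsymm hNp (by simpa using hN 0 left_mem_uIcc)
        hx hy ((hUpp y hy).mono hy hx) ((hUmp y hy).mono hy hx) (by simpa using hUp y hy y hy)
        (by simpa using hUm y hy y hy),
    (traceMulAdjugate ℝ).integral_integral_sub_const (f := fun x => (N x)ᵀ * N x)
      ((continuous_id.matrix_transpose.matrix_mul continuous_id).comp_continuousOn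
        hNp.continuousOn).intervalIntegrable 2,
    traceMulAdjugate_apply, trace_mul_adjugate_s10, Fintype.card_fin]
  ring
end

section
/- Let V: [0,1] → M₂(ℝ) be a real symmetric trace-zero matrix-function with ‖V‖_{L¹[0,1]} < ∞, let N solve N' = VN, N(0) = I, and set H = NᵀN. Then det(∫₀¹ H dx) - 1 ≤ C ‖V‖²_{L¹[0,1]} exp(C‖V‖_{L¹[0,1]}) for some absolute constant C > 0. -/
/-!
Write `N = 1 + R`. Once `N` is known to be bounded, the integral equation gives `‖R‖ = O(‖V‖₁)`,
and since `V` is traceless, `tr (V N) = tr (V R)`, so `tr R = O(‖V‖₁²)`. For `2 × 2` matrices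
`det (1 + P) = 1 + tr P + det P`, and for `P = ∫ (NᵀN - 1) = ∫ (Rᵀ + R + RᵀR)` both `tr P` and
`det P` are `O(‖V‖₁²)` with constants exponential in `‖V‖₁`.

The bound on `N` is a Gronwall estimate, proved by cutting the interval into pieces on which
`∫ 2‖V‖ ≤ 1/2`: across each piece `‖N‖` at most doubles. The equation holds with Bochner integrals,
which vanish on non-integrable functions, so the integrability of `V N` has to be derived as well:
beyond the first point where it fails `N = 1`, and before it `N` obeys the Gronwall bound.
-/

open MeasureTheory Matrix intervalIntegral

attribute [local instance] Matrix.normedAddCommGroup Matrix.normedSpace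

instance : ContinuousENorm (Matrix (Fin 2) (Fin 2) ℝ) := SeminormedAddGroup.toContinuousENorm

open Set Real

-- The topology on `Matrix` is not reducibly the one of the sup norm, so these are not inferred.
instance {n : Type*} [Fintype n] : ContinuousENorm (Matrix n n ℝ) :=
  SeminormedAddGroup.toContinuousENorm

instance {n : Type*} [Fintype n] : ENormedAddMonoid (Matrix n n ℝ) :=
  NormedAddGroup.toENormedAddMonoid

instance {n : Type*} [Fintype n] : TopologicalSpace.PseudoMetrizableSpace (Matrix n n ℝ) :=
  inferInstanceAs (TopologicalSpace.PseudoMetrizableSpace (n → n → ℝ))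

namespace Matrix

variable {l m n : Type*} [Fintype l] [Fintype m] [Fintype n] {α : Type*} [NormedRing α]

theorem norm_mul_le_card_mul (A : Matrix l m α) (B : Matrix m n α) :
    ‖A * B‖ ≤ Fintype.card m * ‖A‖ * ‖B‖ := by
  refine (norm_le_iff (by positivity)).2 fun i j => ?_
  calc ‖(A * B) i j‖ ≤ ∑ k, ‖A i k‖ * ‖B k j‖ :=
        (norm_sum_le _ _).trans (Finset.sum_le_sum fun k _ => norm_mul_le _ _)
    _ ≤ ∑ _k : m, ‖A‖ * ‖B‖ := by
        gcongr <;> exact norm_entry_le_entrywise_sup_norm _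
    _ = Fintype.card m * ‖A‖ * ‖B‖ := by simp [mul_assoc]

theorem norm_trace_le (A : Matrix n n α) : ‖A.trace‖ ≤ Fintype.card n * ‖A‖ :=
  (norm_sum_le _ _).trans <| (Finset.sum_le_sum fun _ _ => norm_entry_le_entrywise_sup_norm A).trans
    (by simp)

theorem norm_one_le [DecidableEq n] [NormOneClass α] : ‖(1 : Matrix n n α)‖ ≤ 1 := by
  refine (norm_le_iff zero_le_one).2 fun i j => ?_
  rcases eq_or_ne i j with rfl | h <;> simp [*]

theorem det_one_add_fin_two {R : Type*} [CommRing R] (P : Matrix (Fin 2) (Fin 2) R) :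
    (1 + P).det = 1 + P.trace + P.det := by
  simp [det_fin_two, trace_fin_two]
  ring

theorem abs_det_fin_two_le (P : Matrix (Fin 2) (Fin 2) ℝ) : |P.det| ≤ 2 * ‖P‖ ^ 2 := by
  have h : ∀ i j, |P i j| ≤ ‖P‖ := fun i j => norm_entry_le_entrywise_sup_norm P
  rw [det_fin_two, two_mul, sq]
  refine (abs_sub _ _).trans (add_le_add ?_ ?_) <;> rw [abs_mul] <;>
    exact mul_le_mul (h _ _) (h _ _) (abs_nonneg _) (norm_nonneg _)

theorem trace_intervalIntegral {f : ℝ → Matrix n n ℝ} {a b : ℝ}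
    (hf : IntervalIntegrable f volume a b) :
    (∫ x in a..b, f x).trace = ∫ x in a..b, (f x).trace :=
  ((LinearMap.toContinuousLinearMap (traceLinearMap n ℝ ℝ)).intervalIntegral_comp_comm hf).symm

variable [DecidableEq n]

theorem transpose_mul_self_sub_one (A : Matrix n n ℝ) :
    Aᵀ * A - 1 = (A - 1)ᵀ + (A - 1) + (A - 1)ᵀ * (A - 1) := by
  rw [transpose_sub, transpose_one]
  noncomm_ring

theorem norm_transpose_mul_self_sub_one_le (A : Matrix n n ℝ) :
    ‖Aᵀ * A - 1‖ ≤ 2 * ‖A - 1‖ + Fintype.card n * ‖A - 1‖ ^ 2 := by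
  rw [transpose_mul_self_sub_one]
  have := norm_mul_le_card_mul (A - 1)ᵀ (A - 1)
  rw [norm_transpose] at this
  calc _ ≤ ‖(A - 1)ᵀ‖ + ‖A - 1‖ + ‖(A - 1)ᵀ * (A - 1)‖ := norm_add₃_le
    _ ≤ _ := by rw [norm_transpose]; linarith

theorem abs_trace_transpose_mul_self_sub_one_le (A : Matrix n n ℝ) :
    |(Aᵀ * A - 1).trace| ≤ 2 * |(A - 1).trace| + Fintype.card n ^ 2 * ‖A - 1‖ ^ 2 := by
  rw [transpose_mul_self_sub_one, trace_add, trace_add, trace_transpose]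
  have h := (norm_trace_le ((A - 1)ᵀ * (A - 1))).trans
    (mul_le_mul_of_nonneg_left (norm_mul_le_card_mul (A - 1)ᵀ (A - 1)) (Nat.cast_nonneg _))
  rw [norm_transpose, Real.norm_eq_abs] at h
  calc _ ≤ |(A - 1).trace + (A - 1).trace| + |((A - 1)ᵀ * (A - 1)).trace| := abs_add_le _ _
    _ ≤ _ := by linarith [abs_add_le (A - 1).trace (A - 1).trace]

end Matrix

section Gronwall

variable {u f : ℝ → ℝ}

theorem integral_le_of_nonneg_of_mem_Icc {a b x : ℝ} (hf : IntegrableOn f (Icc a b))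
    (hf0 : 0 ≤ f) (hx : x ∈ Icc a b) : ∫ s in a..x, f s ≤ ∫ s in a..b, f s :=
  integral_mono_interval le_rfl hx.1 hx.2 (Filter.Eventually.of_forall hf0)
    (hf.mono_set (uIcc_of_le (hx.1.trans hx.2)).subset).intervalIntegrable

theorem le_two_mul_of_le_add_integral {c x B : ℝ} (hcx : c ≤ x)
    (hf : IntegrableOn f (Icc c x)) (hf0 : 0 ≤ f) (hu : ContinuousOn u (Icc c x))
    (hfx : ∫ s in c..x, f s ≤ 1 / 2) (hB : 0 ≤ B) (huc : u c ≤ B)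
    (h : ∀ y ∈ Icc c x, u y ≤ u c + ∫ s in c..y, f s * u s) :
    ∀ y ∈ Icc c x, u y ≤ 2 * B := by
  obtain ⟨z, hz, hmax⟩ := isCompact_Icc.exists_isMaxOn (nonempty_Icc.2 hcx) hu
  suffices u z ≤ 2 * B from fun y hy => (hmax hy).trans this
  rcases lt_or_ge (u z) 0 with hneg | hnonneg
  · linarith
  have hcz : Icc c z ⊆ Icc c x := Icc_subset_Icc le_rfl hz.2
  have hfu : IntervalIntegrable (fun s => f s * u s) volume c z :=
    ((hf.mul_continuousOn hu isCompact_Icc).mono_set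
      (uIcc_of_le hz.1 ▸ hcz)).intervalIntegrable
  have hfz : ∫ s in c..z, f s ≤ 1 / 2 :=
    (integral_le_of_nonneg_of_mem_Icc hf hf0 hz).trans hfx
  have hz_le : u z ≤ B + 1 / 2 * u z := calc
    u z ≤ u c + ∫ s in c..z, f s * u s := h z hz
    _ ≤ B + ∫ s in c..z, f s * u z := by
        gcongr
        refine integral_mono_on hz.1 hfu
          ((hf.mono_set (uIcc_of_le hz.1 ▸ hcz)).intervalIntegrable.mul_const _) fun s hs => ?_
        exact mul_le_mul_of_nonneg_left (hmax (hcz hs)) (hf0 s)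
    _ = B + (∫ s in c..z, f s) * u z := by rw [intervalIntegral.integral_mul_const]
    _ ≤ B + 1 / 2 * u z := by gcongr
  linarith

theorem le_two_pow_mul_of_le_add_integral {a b B : ℝ} (hf : IntegrableOn f (Icc a b))
    (hf0 : 0 ≤ f) (hu : ContinuousOn u (Icc a b)) (hB : 0 ≤ B) (hua : u a ≤ B)
    (h : ∀ c ∈ Icc a b, ∀ y ∈ Icc c b, u y ≤ u c + ∫ s in c..y, f s * u s) (j : ℕ) :
    ∀ x ∈ Icc a b, ∫ s in a..x, f s ≤ j / 2 → u x ≤ 2 ^ (j + 1) * B := by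
  have doubling : ∀ c ∈ Icc a b, ∀ x ∈ Icc c b, ∫ s in c..x, f s ≤ 1 / 2 → ∀ B' : ℝ, 0 ≤ B' →
      u c ≤ B' → u x ≤ 2 * B' := fun c hc x hx hcx B' hB' huc =>
    le_two_mul_of_le_add_integral hx.1 (hf.mono_set (Icc_subset_Icc hc.1 hx.2)) hf0
      (hu.mono (Icc_subset_Icc hc.1 hx.2)) hcx hB' huc
      (fun y hy => h c hc y ⟨hy.1, hy.2.trans hx.2⟩) x ⟨hx.1, le_rfl⟩
  induction j with
  | zero =>
    intro x hx hΦx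
    simpa using doubling a (left_mem_Icc.2 (hx.1.trans hx.2)) x hx (hΦx.trans (by norm_num))
      B hB hua
  | succ j ih =>
    intro x hx hΦx
    rcases le_or_gt (∫ s in a..x, f s) (j / 2) with hle | hgt
    · exact (ih x hx hle).trans (by gcongr <;> norm_num)
    have hΦ : ContinuousOn (fun y => ∫ s in a..y, f s) (Icc a x) := by
      simpa [uIcc_of_le hx.1] using continuousOn_primitive_interval
        (hf.mono_set (uIcc_subset_Icc (left_mem_Icc.2 (hx.1.trans hx.2)) hx))
    obtain ⟨c, hc, hΦc⟩ : ∃ c ∈ Icc a x, ∫ s in a..c, f s = j / 2 :=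
      intermediate_value_Icc hx.1 hΦ ⟨by rw [intervalIntegral.integral_same]; positivity, hgt.le⟩
    have hcb : c ∈ Icc a b := ⟨hc.1, hc.2.trans hx.2⟩
    have hcx : ∫ s in c..x, f s ≤ 1 / 2 := by
      rw [← integral_interval_sub_left
        (hf.mono_set (uIcc_subset_Icc (left_mem_Icc.2 (hx.1.trans hx.2)) hx)).intervalIntegrable
        (hf.mono_set (uIcc_subset_Icc (left_mem_Icc.2 (hx.1.trans hx.2)) hcb)).intervalIntegrable,
        hΦc]
      push_cast at hΦx
      linarith
    have := doubling c hcb x ⟨hc.2, hx.2⟩ hcx _ (by positivity) (ih c hcb hΦc.le)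
    rwa [← mul_assoc, ← pow_succ'] at this

theorem le_mul_exp_of_le_add_integral {a b B : ℝ} (hf : IntegrableOn f (Icc a b))
    (hf0 : 0 ≤ f) (hu : ContinuousOn u (Icc a b)) (hB : 0 ≤ B) (hua : u a ≤ B)
    (h : ∀ c ∈ Icc a b, ∀ y ∈ Icc c b, u y ≤ u c + ∫ s in c..y, f s * u s) :
    ∀ x ∈ Icc a b, u x ≤ B * exp (2 * (∫ s in a..b, f s) + 2) := by
  intro x hx
  have hΦ0 : 0 ≤ ∫ s in a..b, f s :=
    intervalIntegral.integral_nonneg (hx.1.trans hx.2) fun s _ => hf0 s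
  have hΦx := integral_le_of_nonneg_of_mem_Icc hf hf0 hx
  generalize ∫ s in a..b, f s = Φ at hΦ0 hΦx ⊢
  set j := ⌈2 * Φ⌉₊
  have hj : (j : ℝ) < 2 * Φ + 1 := Nat.ceil_lt_add_one (by positivity)
  calc u x ≤ 2 ^ (j + 1) * B :=
        le_two_pow_mul_of_le_add_integral hf hf0 hu hB hua h j x hx
          (by linarith [Nat.le_ceil (2 * Φ)])
    _ ≤ exp 1 ^ (j + 1) * B := by
        gcongr
        linarith [add_one_le_exp 1]
    _ ≤ B * exp (2 * Φ + 2) := by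
        rw [← exp_nat_mul, mul_comm]
        gcongr
        push_cast
        linarith

end Gronwall

theorem aestronglyMeasurable_Ioc_of_continuousOn_Ico_Ioc {E : Type*} [TopologicalSpace E]
    [TopologicalSpace.PseudoMetrizableSpace E] {f : ℝ → E} {c a b : ℝ}
    (h₁ : ContinuousOn f (Ico c a)) (h₂ : ContinuousOn f (Ioc a b)) :
    AEStronglyMeasurable f (volume.restrict (Ioc c b)) := by
  have h₂' : AEStronglyMeasurable f (volume.restrict (Icc a b)) := by
    rw [← Measure.restrict_congr_set Ioc_ae_eq_Icc]
    exact h₂.aestronglyMeasurable measurableSet_Ioc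
  refine (aestronglyMeasurable_union_iff.2 ⟨h₁.aestronglyMeasurable measurableSet_Ico, h₂'⟩)
    |>.mono_measure (Measure.restrict_mono (fun y hy => ?_) le_rfl)
  rcases lt_or_ge y a with h | h
  · exact Or.inl ⟨hy.1.le, h⟩
  · exact Or.inr ⟨h, hy.2⟩

section Volterra

variable {n : Type*} [Fintype n] [DecidableEq n] {V N : ℝ → Matrix n n ℝ} {T : ℝ}

theorem continuousOn_of_eq_one_add_integral
    (hN : ∀ x ∈ Icc 0 T, N x = 1 + ∫ s in 0..x, V s * N s) {b : ℝ} (hb : b ∈ Icc 0 T)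
    (hVN : IntervalIntegrable (fun s => V s * N s) volume 0 b) :
    ContinuousOn N (Icc 0 b) := by
  rw [← uIcc_of_le hb.1]
  refine ContinuousOn.congr (f := fun x => 1 + ∫ s in 0..x, V s * N s)
    (continuousOn_const.add (continuousOn_primitive_interval' hVN left_mem_uIcc)) ?_
  intro x hx
  rw [uIcc_of_le hb.1] at hx
  exact hN x ⟨hx.1, hx.2.trans hb.2⟩

theorem norm_le_norm_add_integral_of_eq_one_add_integral
    (hN : ∀ x ∈ Icc 0 T, N x = 1 + ∫ s in 0..x, V s * N s) (hV : IntegrableOn V (Icc 0 T))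
    {b : ℝ} (hb : b ∈ Icc 0 T) (hVN : IntervalIntegrable (fun s => V s * N s) volume 0 b) :
    ∀ c ∈ Icc 0 b, ∀ y ∈ Icc c b,
      ‖N y‖ ≤ ‖N c‖ + ∫ s in c..y, Fintype.card n * ‖V s‖ * ‖N s‖ := by
  intro c hc y hy
  have hcT : c ∈ Icc 0 T := ⟨hc.1, hc.2.trans hb.2⟩
  have hyT : y ∈ Icc 0 T := ⟨hc.1.trans hy.1, hy.2.trans hb.2⟩
  have hdiff : N y - N c = ∫ s in c..y, V s * N s := by
    rw [hN y hyT, hN c hcT, add_sub_add_left_eq_sub, integral_interval_sub_left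
      (hVN.mono_set (uIcc_subset_uIcc left_mem_uIcc (mem_uIcc_of_le hyT.1 hy.2)))
      (hVN.mono_set (uIcc_subset_uIcc left_mem_uIcc (mem_uIcc_of_le hc.1 hc.2)))]
  have hbound : IntegrableOn (fun s => Fintype.card n * ‖V s‖ * ‖N s‖) (Icc 0 b) :=
    IntegrableOn.mul_continuousOn ((hV.mono_set (Icc_subset_Icc le_rfl hb.2)).norm.const_mul _)
      (continuousOn_of_eq_one_add_integral hN hb hVN).norm isCompact_Icc
  calc ‖N y‖ ≤ ‖N c‖ + ‖N y - N c‖ := norm_le_norm_add_norm_sub' _ _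
    _ ≤ ‖N c‖ + ∫ s in c..y, Fintype.card n * ‖V s‖ * ‖N s‖ := by
        rw [hdiff]
        gcongr
        exact norm_integral_le_of_norm_le hy.1
          (Filter.Eventually.of_forall fun s _ => Matrix.norm_mul_le_card_mul _ _)
          (hbound.mono_set (uIcc_subset_Icc hc ⟨hc.1.trans hy.1, hy.2⟩)).intervalIntegrable

theorem norm_le_exp_of_eq_one_add_integral
    (hN : ∀ x ∈ Icc 0 T, N x = 1 + ∫ s in 0..x, V s * N s) (hV : IntegrableOn V (Icc 0 T))
    {b : ℝ} (hb : b ∈ Icc 0 T) (hVN : IntervalIntegrable (fun s => V s * N s) volume 0 b) :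
    ∀ x ∈ Icc 0 b, ‖N x‖ ≤ exp (2 * (Fintype.card n * ∫ s in 0..T, ‖V s‖) + 2) := by
  intro x hx
  have hVb : IntegrableOn (fun s => Fintype.card n * ‖V s‖) (Icc 0 b) :=
    (hV.mono_set (Icc_subset_Icc le_rfl hb.2)).norm.const_mul _
  have hN0 : ‖N 0‖ ≤ 1 := by
    rw [hN 0 ⟨le_rfl, hb.1.trans hb.2⟩, intervalIntegral.integral_same, add_zero]
    exact Matrix.norm_one_le
  have hbT := integral_le_of_nonneg_of_mem_Icc hV.norm (fun _ => norm_nonneg _) hb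
  calc ‖N x‖ ≤ 1 * exp (2 * (∫ s in 0..b, Fintype.card n * ‖V s‖) + 2) :=
        le_mul_exp_of_le_add_integral (u := fun s => ‖N s‖) hVb (fun _ => by positivity)
          (continuousOn_of_eq_one_add_integral hN hb hVN).norm zero_le_one hN0
          (norm_le_norm_add_integral_of_eq_one_add_integral hN hV hb hVN) x hx
    _ ≤ exp (2 * (Fintype.card n * ∫ s in 0..T, ‖V s‖) + 2) := by
        rw [one_mul, intervalIntegral.integral_const_mul]
        gcongr

theorem continuousOn_Ico_of_eq_one_add_integral
    (hN : ∀ x ∈ Icc 0 T, N x = 1 + ∫ s in 0..x, V s * N s) {a : ℝ} (haT : a ≤ T)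
    (hVN : ∀ y ∈ Ico 0 a, IntervalIntegrable (fun s => V s * N s) volume 0 y) :
    ContinuousOn N (Ico 0 a) := by
  intro x hx
  obtain ⟨y, hxy, hya⟩ := exists_between hx.2
  have hy : y ∈ Ico 0 a := ⟨hx.1.trans hxy.le, hya⟩
  refine ((continuousOn_of_eq_one_add_integral hN ⟨hy.1, hy.2.le.trans haT⟩ (hVN y hy)) x
    ⟨hx.1, hxy.le⟩).mono_of_mem_nhdsWithin ?_
  filter_upwards [self_mem_nhdsWithin, nhdsWithin_le_nhds (Iic_mem_nhds hxy)] with z hz hzy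
  exact ⟨hz.1, hzy⟩

theorem intervalIntegrable_mul_of_eq_one_add_integral (hT : 0 ≤ T)
    (hN : ∀ x ∈ Icc 0 T, N x = 1 + ∫ s in 0..x, V s * N s) (hV : IntegrableOn V (Icc 0 T)) :
    IntervalIntegrable (fun s => V s * N s) volume 0 T := by
  by_contra hbad
  set bad := {x ∈ Icc 0 T | ¬IntervalIntegrable (fun s => V s * N s) volume 0 x}
  have hTbad : T ∈ bad := ⟨⟨hT, le_rfl⟩, hbad⟩
  have hbdd : BddBelow bad := ⟨0, fun x hx => hx.1.1⟩
  set a := sInf bad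
  have ha0 : 0 ≤ a := le_csInf ⟨T, hTbad⟩ fun x hx => hx.1.1
  have haT : a ≤ T := csInf_le hbdd hTbad
  have below : ∀ y ∈ Ico 0 a, IntervalIntegrable (fun s => V s * N s) volume 0 y := by
    intro y hy
    by_contra h
    exact (csInf_le hbdd ⟨⟨hy.1, hy.2.le.trans haT⟩, h⟩).not_gt hy.2
  have above : ∀ y ∈ Ioc a T, N y = 1 := by
    intro y hy
    have hy0 : 0 ≤ y := ha0.trans hy.1.le
    have : ¬IntervalIntegrable (fun s => V s * N s) volume 0 y := fun hint =>
      (le_csInf ⟨T, hTbad⟩ fun x hx => le_of_not_gt fun hxy =>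
        hx.2 (hint.mono_set (uIcc_subset_uIcc left_mem_uIcc (mem_uIcc_of_le hx.1.1 hxy.le)))).not_gt
        hy.1
    rw [hN y ⟨hy0, hy.2⟩, intervalIntegral.integral_undef this, add_zero]
  set M := exp (2 * (Fintype.card n * ∫ s in 0..T, ‖V s‖) + 2)
  have hM : ∀ᵐ y ∂volume.restrict (Ioc 0 T), ‖N y‖ ≤ M := by
    have hne : ∀ᵐ y ∂volume.restrict (Ioc 0 T), y ∉ ({a} : Set ℝ) :=
      ae_restrict_of_ae (measure_eq_zero_iff_ae_notMem.1 (measure_singleton a))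
    filter_upwards [ae_restrict_mem measurableSet_Ioc, hne] with y hy hya
    rcases lt_or_gt_of_ne hya with hlt | hgt
    · exact norm_le_exp_of_eq_one_add_integral hN hV ⟨hy.1.le, hlt.le.trans haT⟩
        (below y ⟨hy.1.le, hlt⟩) y ⟨hy.1.le, le_rfl⟩
    · rw [above y ⟨hgt, hy.2⟩]
      have hK : 0 ≤ ∫ s in 0..T, ‖V s‖ :=
        intervalIntegral.integral_nonneg hT fun _ _ => norm_nonneg _
      exact Matrix.norm_one_le.trans (one_le_exp (by positivity))
  have hNmeas : AEStronglyMeasurable N (volume.restrict (Ioc 0 T)) :=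
    aestronglyMeasurable_Ioc_of_continuousOn_Ico_Ioc
      (continuousOn_Ico_of_eq_one_add_integral hN haT below) (continuousOn_const.congr above)
  refine hbad ((intervalIntegrable_iff_integrableOn_Ioc_of_le hT).2 ?_)
  refine Integrable.mono' ((IntegrableOn.mono_set hV.norm Ioc_subset_Icc_self).const_mul
    (Fintype.card n * M)) ((hV.mono_set Ioc_subset_Icc_self).aestronglyMeasurable.mul hNmeas) ?_
  filter_upwards [hM] with y hy
  calc ‖V y * N y‖ ≤ Fintype.card n * ‖V y‖ * ‖N y‖ := Matrix.norm_mul_le_card_mul _ _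
    _ ≤ Fintype.card n * M * ‖V y‖ := by
        rw [mul_right_comm]
        gcongr

theorem norm_sub_one_le_of_eq_one_add_integral
    (hN : ∀ x ∈ Icc 0 T, N x = 1 + ∫ s in 0..x, V s * N s) (hV : IntegrableOn V (Icc 0 T))
    {M : ℝ} (hM : ∀ x ∈ Icc 0 T, ‖N x‖ ≤ M) :
    ∀ x ∈ Icc 0 T, ‖N x - 1‖ ≤ Fintype.card n * M * ∫ s in 0..T, ‖V s‖ := by
  intro x hx
  have hVx : IntervalIntegrable (fun s => ‖V s‖) volume 0 x :=
    (IntegrableOn.mono_set hV.norm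
      (uIcc_subset_Icc ⟨le_rfl, hx.1.trans hx.2⟩ hx)).intervalIntegrable
  calc ‖N x - 1‖ = ‖∫ s in 0..x, V s * N s‖ := by rw [hN x hx, add_sub_cancel_left]
    _ ≤ ∫ s in 0..x, Fintype.card n * M * ‖V s‖ := by
        refine norm_integral_le_of_norm_le hx.1 (Filter.Eventually.of_forall fun s hs => ?_)
          (hVx.const_mul _)
        calc ‖V s * N s‖ ≤ Fintype.card n * ‖V s‖ * ‖N s‖ := Matrix.norm_mul_le_card_mul _ _
          _ ≤ Fintype.card n * M * ‖V s‖ := by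
              rw [mul_right_comm]
              gcongr
              exact hM s ⟨hs.1.le, hs.2.trans hx.2⟩
    _ ≤ Fintype.card n * M * ∫ s in 0..T, ‖V s‖ := by
        rw [intervalIntegral.integral_const_mul]
        have hM0 : 0 ≤ M := (norm_nonneg _).trans (hM x hx)
        gcongr
        exact integral_le_of_nonneg_of_mem_Icc hV.norm (fun _ => norm_nonneg _) hx

theorem abs_trace_sub_one_le_of_eq_one_add_integral
    (hN : ∀ x ∈ Icc 0 T, N x = 1 + ∫ s in 0..x, V s * N s) (hV : IntegrableOn V (Icc 0 T))
    (htr : ∀ x ∈ Icc 0 T, (V x).trace = 0)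
    (hVN : IntervalIntegrable (fun s => V s * N s) volume 0 T)
    {r : ℝ} (hr : ∀ x ∈ Icc 0 T, ‖N x - 1‖ ≤ r) :
    ∀ x ∈ Icc 0 T, |(N x - 1).trace| ≤ Fintype.card n ^ 2 * r * ∫ s in 0..T, ‖V s‖ := by
  intro x hx
  have hVx : IntervalIntegrable (fun s => ‖V s‖) volume 0 x :=
    (IntegrableOn.mono_set hV.norm
      (uIcc_subset_Icc ⟨le_rfl, hx.1.trans hx.2⟩ hx)).intervalIntegrable
  have hVNx : IntervalIntegrable (fun s => V s * N s) volume 0 x :=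
    hVN.mono_set (uIcc_subset_uIcc left_mem_uIcc (mem_uIcc_of_le hx.1 hx.2))
  calc |(N x - 1).trace| = |∫ s in 0..x, (V s * N s).trace| := by
        rw [hN x hx, add_sub_cancel_left, Matrix.trace_intervalIntegral hVNx]
    _ ≤ ∫ s in 0..x, Fintype.card n ^ 2 * r * ‖V s‖ := by
        rw [← Real.norm_eq_abs]
        refine norm_integral_le_of_norm_le hx.1 (Filter.Eventually.of_forall fun s hs => ?_)
          (hVx.const_mul _)
        have hs' : s ∈ Icc 0 T := ⟨hs.1.le, hs.2.trans hx.2⟩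
        have htrVN : (V s * N s).trace = (V s * (N s - 1)).trace := by
          rw [mul_sub, mul_one, Matrix.trace_sub, htr s hs', sub_zero]
        rw [htrVN]
        calc ‖(V s * (N s - 1)).trace‖ ≤ Fintype.card n * ‖V s * (N s - 1)‖ :=
              Matrix.norm_trace_le _
          _ ≤ Fintype.card n * (Fintype.card n * ‖V s‖ * ‖N s - 1‖) := by
              gcongr
              exact Matrix.norm_mul_le_card_mul _ _
          _ ≤ Fintype.card n * (Fintype.card n * ‖V s‖ * r) := by
              gcongr
              exact hr s hs'
          _ = Fintype.card n ^ 2 * r * ‖V s‖ := by ring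
    _ ≤ Fintype.card n ^ 2 * r * ∫ s in 0..T, ‖V s‖ := by
        rw [intervalIntegral.integral_const_mul]
        have hr0 : 0 ≤ r := (norm_nonneg _).trans (hr x hx)
        gcongr
        exact integral_le_of_nonneg_of_mem_Icc hV.norm (fun _ => norm_nonneg _) hx

end Volterra

theorem det_integral_transpose_mul_self_sub_one_le {N : ℝ → Matrix (Fin 2) (Fin 2) ℝ}
    (hN : ContinuousOn N (Icc 0 1)) {ρ τ : ℝ} (hρ : ∀ x ∈ Icc (0 : ℝ) 1, ‖N x - 1‖ ≤ ρ)
    (hτ : ∀ x ∈ Icc (0 : ℝ) 1, |(N x - 1).trace| ≤ τ) :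
    (∫ ξ in (0 : ℝ)..1, (N ξ)ᵀ * N ξ).det - 1 ≤
      2 * τ + 4 * ρ ^ 2 + 2 * (2 * ρ + 2 * ρ ^ 2) ^ 2 := by
  have hρ0 : 0 ≤ ρ := (norm_nonneg _).trans (hρ 0 ⟨le_rfl, zero_le_one⟩)
  have hH : IntervalIntegrable (fun ξ => (N ξ)ᵀ * N ξ) volume 0 1 :=
    ((continuous_id.matrix_transpose.comp_continuousOn hN).mul hN).intervalIntegrable_of_Icc
      zero_le_one
  have hnorm_le : ∀ x ∈ uIoc (0 : ℝ) 1, ‖(N x)ᵀ * N x - 1‖ ≤ 2 * ρ + 2 * ρ ^ 2 := by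
    intro x hx
    rw [uIoc_of_le zero_le_one] at hx
    refine (Matrix.norm_transpose_mul_self_sub_one_le (N x)).trans ?_
    simp only [Fintype.card_fin, Nat.cast_ofNat]
    gcongr <;> exact hρ x (Ioc_subset_Icc_self hx)
  have htrace_le : ∀ x ∈ uIoc (0 : ℝ) 1, ‖((N x)ᵀ * N x - 1).trace‖ ≤ 2 * τ + 4 * ρ ^ 2 := by
    intro x hx
    rw [uIoc_of_le zero_le_one] at hx
    refine (Matrix.abs_trace_transpose_mul_self_sub_one_le (N x)).trans ?_
    simp only [Fintype.card_fin, Nat.cast_ofNat]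
    gcongr
    · exact hτ x (Ioc_subset_Icc_self hx)
    · norm_num
    · exact hρ x (Ioc_subset_Icc_self hx)
  set P := ∫ ξ in (0 : ℝ)..1, ((N ξ)ᵀ * N ξ - 1)
  have hP : ∫ ξ in (0 : ℝ)..1, (N ξ)ᵀ * N ξ = 1 + P := by
    simp [P, intervalIntegral.integral_sub hH intervalIntegrable_const]
  have hnorm : ‖P‖ ≤ 2 * ρ + 2 * ρ ^ 2 := by
    simpa using intervalIntegral.norm_integral_le_of_norm_le_const hnorm_le
  have htrace : |P.trace| ≤ 2 * τ + 4 * ρ ^ 2 := by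
    rw [Matrix.trace_intervalIntegral (hH.sub intervalIntegrable_const), ← Real.norm_eq_abs]
    simpa using intervalIntegral.norm_integral_le_of_norm_le_const htrace_le
  calc (∫ ξ in (0 : ℝ)..1, (N ξ)ᵀ * N ξ).det - 1 = P.trace + P.det := by
        rw [hP, Matrix.det_one_add_fin_two]
        ring
    _ ≤ |P.trace| + 2 * ‖P‖ ^ 2 :=
        add_le_add (le_abs_self _) ((le_abs_self _).trans (Matrix.abs_det_fin_two_le P))
    _ ≤ _ := by gcongr

theorem det_bound_le_mul_sq_mul_exp {K ρ τ : ℝ} (hK : 0 ≤ K)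
    (hρ : ρ = 2 * exp (2 * (2 * K) + 2) * K) (hτ : τ = 2 ^ 2 * ρ * K) :
    2 * τ + 4 * ρ ^ 2 + 2 * (2 * ρ + 2 * ρ ^ 2) ^ 2 ≤
      320 * exp 12 * K ^ 2 * exp (320 * exp 12 * K) := by
  set q := exp (2 * (2 * K) + 2)
  have hq1 : 1 ≤ q := one_le_exp (by positivity)
  have hKq : K ≤ q := by
    linarith [add_one_le_exp K, exp_le_exp.2 (by linarith : K ≤ 2 * (2 * K) + 2)]
  have hq6 : q ^ 6 = exp 12 * exp (24 * K) := by
    rw [← exp_nat_mul, ← exp_add]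
    ring_nf
  have h24 : 24 ≤ 320 * exp 12 := by linarith [one_le_exp (by norm_num : (0 : ℝ) ≤ 12)]
  subst hρ hτ
  -- `1 + 2qK ≤ 3q²`, so every term is at most a multiple of `q⁶ K²`.
  calc _ = K ^ 2 * (16 * q + 16 * q ^ 2 + 32 * q ^ 2 * (1 + 2 * q * K) ^ 2) := by ring
    _ ≤ K ^ 2 * (320 * q ^ 6) := by
        gcongr
        have h3 : 1 + 2 * q * K ≤ 3 * q ^ 2 := by nlinarith
        have : q ≤ q ^ 6 := le_self_pow₀ hq1 (by norm_num)
        have : q ^ 2 ≤ q ^ 6 := pow_le_pow_right₀ hq1 (by norm_num)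
        nlinarith [pow_le_pow_left₀ (by positivity) h3 2]
    _ = 320 * exp 12 * K ^ 2 * exp (24 * K) := by rw [hq6]; ring
    _ ≤ _ := by gcongr

/-- Let `V : [0,1] → M₂(ℝ)` be symmetric trace-zero with `‖V‖_{L¹[0,1]} < ∞`, let
`N` solve `N' = VN`, `N(0) = I`, and `H = NᵀN`. Then
`det(∫₀¹ H) - 1 ≤ C ‖V‖²_{L¹[0,1]} exp(C ‖V‖_{L¹[0,1]})` for an absolute `C > 0`. -/
theorem stmt_11 : ∃ C : ℝ, 0 < C ∧
    ∀ V N : ℝ → Matrix (Fin 2) (Fin 2) ℝ,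
      IntegrableOn V (Set.Icc (0 : ℝ) 1) volume →
      (∀ x ∈ Set.Icc (0 : ℝ) 1, (V x)ᵀ = V x) →
      (∀ x ∈ Set.Icc (0 : ℝ) 1, (V x).trace = 0) →
      (∀ x ∈ Set.Icc (0 : ℝ) 1, N x = 1 + ∫ s in (0 : ℝ)..x, V s * N s) →
      (∫ ξ in (0 : ℝ)..1, (N ξ)ᵀ * N ξ).det - 1 ≤
        C * (∫ x in Set.Icc (0 : ℝ) 1, ‖V x‖) ^ 2 *
          Real.exp (C * ∫ x in Set.Icc (0 : ℝ) 1, ‖V x‖) := by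
  refine ⟨320 * exp 12, by positivity, fun V N hV _ htr hN => ?_⟩
  have h01 : (1 : ℝ) ∈ Icc 0 1 := ⟨zero_le_one, le_rfl⟩
  have hVN := intervalIntegrable_mul_of_eq_one_add_integral zero_le_one hN hV
  have hρ := norm_sub_one_le_of_eq_one_add_integral hN hV
    (norm_le_exp_of_eq_one_add_integral hN hV h01 hVN)
  have hτ := abs_trace_sub_one_le_of_eq_one_add_integral hN hV htr hVN hρ
  simp only [Fintype.card_fin, Nat.cast_ofNat] at hρ hτ
  rw [integral_Icc_eq_integral_Ioc, ← intervalIntegral.integral_of_le zero_le_one]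
  exact (det_integral_transpose_mul_self_sub_one_le
    (continuousOn_of_eq_one_add_integral hN h01 hVN) hρ hτ).trans
    (det_bound_le_mul_sq_mul_exp (intervalIntegral.integral_nonneg zero_le_one
      fun _ _ => norm_nonneg _) rfl rfl)
end

section
/- Let g: ℝ → ℂ be locally integrable and for k ∈ ℤ let I_k = [k, k+2] and ⟨g⟩_{I_k} the mean of g over I_k. Then ∑_{k ∈ ℤ} ∑_{j ≤ k} e^{-(k-j)} |⟨g⟩_{I_j} - ⟨g⟩_{I_k}|² ≤ C ∑_{s ∈ ℤ} ∫_{I_s} |g - ⟨g⟩_{I_s}|² dx for an absolute constant C > 0. -/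
/-!
Write `A_s = ∫_{I_s} |g - ⟨g⟩_{I_s}|²`. Consecutive intervals `I_s`, `I_{s+1}` share the unit
interval `[s+1, s+2]`; comparing both means with the mean over it (Jensen) gives
`|⟨g⟩_{I_s} - ⟨g⟩_{I_{s+1}}|² ≤ 2 (A_s + A_{s+1})`. Telescoping and Cauchy–Schwarz then give
`|⟨g⟩_{I_j} - ⟨g⟩_{I_k}|² ≤ 4 (k - j) ∑_{j ≤ i ≤ k} A_i`. Since `n e^{-n} ≤ 2 e^{-n/2}` and
`e^{-(k-j)/2} = e^{-(k-i)/2} e^{-(i-j)/2}`, the double sum is dominated by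
`8 ∑_{k,j,i} w(k-i) w(i-j) A_i = 8 (∑ w)² ∑ A_i` with `w(n) = e^{-n/2}` on `n ≥ 0`,
and `∑ w = (1 - e^{-1/2})⁻¹ ≤ 3`.
-/

open MeasureTheory
open scoped ENNReal NNReal

/-- The mean of `g` over the interval `I_k = [k, k+2]`. -/
noncomputable def intervalMean (g : ℝ → ℂ) (k : ℤ) : ℂ :=
  (2 : ℂ)⁻¹ * ∫ x in Set.Icc (k : ℝ) (k + 2), g x

open Finset Real

theorem sq_lintegral_enorm_le {α E : Type*} [MeasurableSpace α] [NormedAddCommGroup E]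
    {μ : Measure α} [IsProbabilityMeasure μ] {f : α → E} (hf : AEStronglyMeasurable f μ) :
    (∫⁻ x, ‖f x‖ₑ ∂μ) ^ 2 ≤ ∫⁻ x, ‖f x‖ₑ ^ 2 ∂μ := by
  have h := eLpNorm_nnreal_pow_eq_lintegral (f := f) (μ := μ) (p := 2) two_ne_zero
  simp only [NNReal.coe_ofNat, ENNReal.rpow_ofNat] at h
  rw [← eLpNorm_one_eq_lintegral_enorm, ← h]
  gcongr
  exact eLpNorm_le_eLpNorm_of_exponent_le one_le_two hf

theorem enorm_sub_integral_sq_le {α E : Type*} [MeasurableSpace α] [NormedAddCommGroup E]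
    [NormedSpace ℝ E] [CompleteSpace E] {μ : Measure α} [IsProbabilityMeasure μ] {f : α → E}
    (hf : Integrable f μ) (c : E) :
    ‖c - ∫ x, f x ∂μ‖ₑ ^ 2 ≤ ∫⁻ x, ‖f x - c‖ₑ ^ 2 ∂μ := by
  have hc : c - ∫ x, f x ∂μ = ∫ x, (c - f x) ∂μ := by
    rw [integral_sub (integrable_const c) hf, integral_const, probReal_univ, one_smul]
  calc ‖c - ∫ x, f x ∂μ‖ₑ ^ 2 ≤ (∫⁻ x, ‖c - f x‖ₑ ∂μ) ^ 2 := by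
        rw [hc]; gcongr; exact enorm_integral_le_lintegral_enorm _
    _ ≤ ∫⁻ x, ‖c - f x‖ₑ ^ 2 ∂μ := sq_lintegral_enorm_le (aestronglyMeasurable_const.sub hf.1)
    _ = ∫⁻ x, ‖f x - c‖ₑ ^ 2 ∂μ := by simp_rw [enorm_sub_rev]

theorem nnnorm_sub_sq_le_mul_sum_sq {E : Type*} [SeminormedAddCommGroup E] (a : ℕ → E) (n : ℕ) :
    ‖a 0 - a n‖₊ ^ 2 ≤ n * ∑ i ∈ range n, ‖a i - a (i + 1)‖₊ ^ 2 := by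
  have htel : ‖a 0 - a n‖₊ ≤ ∑ i ∈ range n, ‖a i - a (i + 1)‖₊ :=
    sum_range_sub' a n ▸ nnnorm_sum_le _ _
  calc ‖a 0 - a n‖₊ ^ 2 ≤ (∑ i ∈ range n, ‖a i - a (i + 1)‖₊) ^ 2 := by gcongr
    _ ≤ n * ∑ i ∈ range n, ‖a i - a (i + 1)‖₊ ^ 2 := by
      simpa using sq_sum_le_card_mul_sum_sq (s := range n) (f := fun i ↦ ‖a i - a (i + 1)‖₊)

theorem tsum_tsum_tsum_mul_sub_mul_sub {G : Type*} [AddGroup G] (u v A : G → ℝ≥0∞) :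
    ∑' k, ∑' j, ∑' i, u (k - i) * v (i - j) * A i
      = (∑' n, u n) * (∑' n, v n) * ∑' i, A i := by
  have hu (i : G) : ∑' k, u (k - i) = ∑' n, u n := (Equiv.subRight i).tsum_eq u
  have hv (i : G) : ∑' j, v (i - j) = ∑' n, v n := (Equiv.subLeft i).tsum_eq v
  calc ∑' k, ∑' j, ∑' i, u (k - i) * v (i - j) * A i
      = ∑' k, ∑' i, ∑' j, u (k - i) * v (i - j) * A i := tsum_congr fun k ↦ ENNReal.tsum_comm
    _ = ∑' i, ∑' k, ∑' j, u (k - i) * v (i - j) * A i := ENNReal.tsum_comm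
    _ = ∑' i, (∑' k, u (k - i)) * (∑' j, v (i - j)) * A i := by
        simp only [ENNReal.tsum_mul_right, ENNReal.tsum_mul_left, mul_assoc]
    _ = (∑' n, u n) * (∑' n, v n) * ∑' i, A i := by
        simp_rw [hu, hv, ENNReal.tsum_mul_left]

theorem mul_exp_neg_le_two_mul_exp_neg_half (x : ℝ) : x * exp (-x) ≤ 2 * exp (-(x / 2)) := by
  have hx : x ≤ 2 * exp (x / 2) := by linarith [add_one_le_exp (x / 2)]
  calc x * exp (-x) ≤ 2 * exp (x / 2) * exp (-x) := by gcongr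
    _ = 2 * exp (-(x / 2)) := by rw [mul_assoc, ← exp_add]; ring_nf

noncomputable def decayWeight : ℤ → ℝ≥0∞ :=
  Function.extend ((↑) : ℕ → ℤ) (fun n ↦ ENNReal.ofReal (exp (-(1 / 2))) ^ n) 0

theorem decayWeight_natCast (n : ℕ) :
    decayWeight n = ENNReal.ofReal (exp (-(1 / 2))) ^ n :=
  Nat.cast_injective.extend_apply _ _ n

theorem tsum_decayWeight_le : ∑' n, decayWeight n ≤ 3 := by
  rw [decayWeight, tsum_extend_zero Nat.cast_injective, ENNReal.tsum_geometric,
    ← ENNReal.ofReal_one, ← ENNReal.ofReal_sub _ (exp_nonneg _),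
    ← ENNReal.ofReal_inv_of_pos (by simp [exp_lt_one_iff]), ← ENNReal.ofReal_ofNat]
  refine ENNReal.ofReal_le_ofReal ?_
  have hprod : exp (1 / 2) * exp (-(1 / 2)) = 1 := by rw [← exp_add]; simp
  have hhalf := add_one_le_exp (1 / 2)
  rw [inv_le_comm₀ (by simp [exp_lt_one_iff]) (by norm_num)]
  nlinarith [exp_pos (-(1 / 2))]

theorem ofReal_exp_neg_mul_le_decayWeight (n : ℕ) :
    ENNReal.ofReal (exp (-n)) * (4 * n) ≤ 8 * decayWeight n := by
  have h := mul_exp_neg_le_two_mul_exp_neg_half n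
  have h4n : (4 * n : ℝ≥0∞) = ENNReal.ofReal (4 * n) := by simp [ENNReal.ofReal_mul]
  rw [decayWeight_natCast, ← ENNReal.ofReal_pow (exp_nonneg _), ← exp_nat_mul, h4n,
    ← ENNReal.ofReal_mul (exp_nonneg _), ← ENNReal.ofReal_ofNat 8,
    ← ENNReal.ofReal_mul (by norm_num)]
  refine ENNReal.ofReal_le_ofReal ?_
  rw [show (n : ℝ) * -(1 / 2) = -(n / 2) by ring]
  linarith

noncomputable def sqOscillation (g : ℝ → ℂ) (s : ℤ) : ℝ≥0∞ :=
  ∫⁻ x in Set.Icc (s : ℝ) (s + 2), ‖g x - intervalMean g s‖ₑ ^ 2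

section

variable {g : ℝ → ℂ} (hg : LocallyIntegrable g volume)
include hg

theorem enorm_intervalMean_sub_succ_sq_le (s : ℤ) :
    ‖intervalMean g s - intervalMean g (s + 1)‖ₑ ^ 2
      ≤ 2 * (sqOscillation g s + sqOscillation g (s + 1)) := by
  set J := Set.Icc ((s : ℝ) + 1) (s + 1 + 1)
  have : IsProbabilityMeasure (volume.restrict J) := ⟨by simp [J]⟩
  set q := ∫ x in J, g x
  have hJ : IntegrableOn g J volume := hg.integrableOn_isCompact isCompact_Icc
  have hleft : ‖intervalMean g s - q‖ₑ ^ 2 ≤ sqOscillation g s :=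
    (enorm_sub_integral_sq_le hJ _).trans <| lintegral_mono_set <|
      Set.Icc_subset_Icc (by linarith) (by linarith)
  have hright : ‖intervalMean g (s + 1) - q‖ₑ ^ 2 ≤ sqOscillation g (s + 1) :=
    (enorm_sub_integral_sq_le hJ _).trans <| lintegral_mono_set <|
      Set.Icc_subset_Icc (by push_cast; rfl) (by push_cast; linarith)
  have htri : ‖intervalMean g s - intervalMean g (s + 1)‖₊
      ≤ ‖intervalMean g s - q‖₊ + ‖intervalMean g (s + 1) - q‖₊ :=
    sub_sub_sub_cancel_right (intervalMean g s) (intervalMean g (s + 1)) q ▸ nnnorm_sub_le _ _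
  calc ‖intervalMean g s - intervalMean g (s + 1)‖ₑ ^ 2
      ≤ ((2 * (‖intervalMean g s - q‖₊ ^ 2 + ‖intervalMean g (s + 1) - q‖₊ ^ 2) : ℝ≥0) :
          ℝ≥0∞) := by
        rw [enorm_eq_nnnorm, ← ENNReal.coe_pow, ENNReal.coe_le_coe]
        exact (pow_le_pow_left₀ zero_le htri 2).trans add_sq_le
    _ ≤ 2 * (sqOscillation g s + sqOscillation g (s + 1)) := by
        push_cast
        simp only [← enorm_eq_nnnorm]
        gcongr

theorem enorm_intervalMean_sub_sq_le (j : ℤ) (n : ℕ) :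
    ‖intervalMean g j - intervalMean g (j + n)‖ₑ ^ 2
      ≤ 4 * n * ∑ i ∈ range (n + 1), sqOscillation g (j + i) := by
  set A := fun i : ℕ ↦ sqOscillation g (j + i)
  have hstep (i : ℕ) : ‖intervalMean g (j + i) - intervalMean g (j + (i + 1 : ℕ))‖ₑ ^ 2
      ≤ 2 * (A i + A (i + 1)) := by
    simpa [A, add_assoc] using enorm_intervalMean_sub_succ_sq_le hg (j + i)
  have hshift : ∑ i ∈ range n, (A i + A (i + 1)) ≤ 2 * ∑ i ∈ range (n + 1), A i := by
    rw [sum_add_distrib, two_mul]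
    gcongr
    · omega
    · rw [sum_range_succ' A]
      exact self_le_add_right _ _
  calc ‖intervalMean g j - intervalMean g (j + n)‖ₑ ^ 2
      ≤ n * ∑ i ∈ range n, ‖intervalMean g (j + i) - intervalMean g (j + (i + 1 : ℕ))‖ₑ ^ 2 := by
        have h := nnnorm_sub_sq_le_mul_sum_sq (fun i : ℕ ↦ intervalMean g (j + i)) n
        simp only [Nat.cast_zero, add_zero] at h
        simp only [enorm_eq_nnnorm]
        exact_mod_cast h
    _ ≤ n * ∑ i ∈ range n, 2 * (A i + A (i + 1)) := by gcongr with i; exact hstep i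
    _ ≤ n * (2 * (2 * ∑ i ∈ range (n + 1), A i)) := by rw [← mul_sum]; gcongr
    _ = 4 * n * ∑ i ∈ range (n + 1), A i := by ring

theorem ofReal_exp_neg_mul_norm_intervalMean_sub_sq_le (j : ℤ) (n : ℕ) :
    ENNReal.ofReal (exp (-n) * ‖intervalMean g j - intervalMean g (j + n)‖ ^ 2)
      ≤ 8 * ∑' i, decayWeight (j + n - i) * decayWeight (i - j) * sqOscillation g i := by
  set A := sqOscillation g
  have hweight (i : ℕ) (hi : i ∈ range (n + 1)) :
      decayWeight n = decayWeight (j + n - (j + i)) * decayWeight (j + i - j) := by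
    have hin : i ≤ n := Nat.lt_succ_iff.1 (mem_range.1 hi)
    rw [show j + n - (j + i) = ((n - i : ℕ) : ℤ) by omega, add_sub_cancel_left,
      decayWeight_natCast, decayWeight_natCast, decayWeight_natCast, pow_sub_mul_pow _ hin]
  calc ENNReal.ofReal (exp (-n) * ‖intervalMean g j - intervalMean g (j + n)‖ ^ 2)
      = ENNReal.ofReal (exp (-n)) * ‖intervalMean g j - intervalMean g (j + n)‖ₑ ^ 2 := by
        rw [ENNReal.ofReal_mul (exp_nonneg _), ENNReal.ofReal_pow (norm_nonneg _), ofReal_norm]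
    _ ≤ ENNReal.ofReal (exp (-n)) * (4 * n * ∑ i ∈ range (n + 1), A (j + i)) := by
        gcongr; exact enorm_intervalMean_sub_sq_le hg j n
    _ ≤ 8 * decayWeight n * ∑ i ∈ range (n + 1), A (j + i) := by
        rw [← mul_assoc]
        gcongr ?_ * _
        exact ofReal_exp_neg_mul_le_decayWeight n
    _ = 8 * ∑ i ∈ range (n + 1),
          decayWeight (j + n - (j + i)) * decayWeight (j + i - j) * A (j + i) := by
        rw [mul_assoc, mul_sum]
        exact congrArg _ (sum_congr rfl fun i hi ↦ by rw [hweight i hi])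
    _ ≤ 8 * ∑' i, decayWeight (j + n - i) * decayWeight (i - j) * A i := by
        gcongr
        exact (ENNReal.sum_le_tsum _).trans <| ENNReal.tsum_comp_le_tsum_of_injective
          ((add_right_injective j).comp Nat.cast_injective)
            (fun i ↦ decayWeight (j + n - i) * decayWeight (i - j) * A i)

end

/-- For locally integrable `g : ℝ → ℂ`, with `I_k = [k, k+2]`,
`∑_{k ∈ ℤ} ∑_{j ≤ k} e^{-(k-j)} |⟨g⟩_{I_j} - ⟨g⟩_{I_k}|² ≤ C ∑_{s ∈ ℤ} ∫_{I_s} |g - ⟨g⟩_{I_s}|²`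
for an absolute constant `C > 0` (all quantities taken in `[0,∞]`). -/
theorem stmt_14 : ∃ C : ℝ, 0 < C ∧
    ∀ g : ℝ → ℂ, LocallyIntegrable g (volume : Measure ℝ) →
      (∑' k : ℤ, ∑' j : ℤ, if j ≤ k then
          ENNReal.ofReal (Real.exp (-(k - j : ℝ)) *
            ‖intervalMean g j - intervalMean g k‖ ^ 2) else 0) ≤
        ENNReal.ofReal C * ∑' s : ℤ, ∫⁻ x in Set.Icc (s : ℝ) (s + 2),
          (‖g x - intervalMean g s‖₊ : ℝ≥0∞) ^ 2 := by
  refine ⟨72, by norm_num, fun g hg ↦ ?_⟩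
  have hpair (k j : ℤ) : (if j ≤ k then ENNReal.ofReal (Real.exp (-(k - j : ℝ)) *
      ‖intervalMean g j - intervalMean g k‖ ^ 2) else 0)
        ≤ 8 * ∑' i, decayWeight (k - i) * decayWeight (i - j) * sqOscillation g i := by
    split_ifs with hjk
    · obtain ⟨n, rfl⟩ := Int.le.dest hjk
      simpa using ofReal_exp_neg_mul_norm_intervalMean_sub_sq_le hg j n
    · exact zero_le
  calc _ ≤ ∑' k, ∑' j, 8 * ∑' i, decayWeight (k - i) * decayWeight (i - j) * sqOscillation g i :=
        ENNReal.tsum_le_tsum fun k ↦ ENNReal.tsum_le_tsum fun j ↦ hpair k j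
    _ = 8 * ((∑' n, decayWeight n) * (∑' n, decayWeight n) * ∑' s, sqOscillation g s) := by
        simp_rw [ENNReal.tsum_mul_left, tsum_tsum_tsum_mul_sub_mul_sub]
    _ ≤ 8 * (3 * 3 * ∑' s, sqOscillation g s) := by gcongr <;> exact tsum_decayWeight_le
    _ = ENNReal.ofReal 72 * ∑' s, sqOscillation g s := by
        rw [ENNReal.ofReal_ofNat, ← mul_assoc, ← mul_assoc]; norm_num
end
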